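/- arXiv:2102.06771 — 3 statements merged into one kernel-verified Lean document; each statement's English description precedes it below -/
import Mathlib

section
/- Let T : ℓ₂ → ℓ₂ be a linear isometry (not necessarily surjective) and let g = T|_{B_{ℓ₂}} ∈ ℋ^∞(B_{ℓ₂},ℓ₂). Then the fiber 𝓕(g) consists exactly of the composition homomorphism C_g; that is, every Φ ∈ ℳ_{u,∞}(B_{ℓ₂},B_{ℓ₂}) with ξ(Φ) = g satisfies Φ(f)(x) = f̃(Tx) for all f ∈ 𝒜_u(B_{ℓ₂}) and all x ∈ B_{ℓ₂}. -/
open Metric Set Filter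

noncomputable section

/-- `ℓ2` is the complex Hilbert space of square-summable sequences indexed by `ℕ`. -/
abbrev ℓ2 : Type := lp (fun _ : ℕ => ℂ) 2

/-- The open unit ball of `ℓ2`. -/
def oB : Set ℓ2 := Metric.ball 0 1

/-- The closed unit ball of `ℓ2`. -/
def cB : Set ℓ2 := Metric.closedBall 0 1

/-- The unit sphere of `ℓ2`. -/
def sph : Set ℓ2 := Metric.sphere 0 1

/-- The coordinate functional `x ↦ ⟨x, eₙ⟩ = xₙ` (inner ℂ product linear in the first variable). -/
def coord (n : ℕ) : ℓ2 → ℂ := fun x => x n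

/-- Supremum norm on the open unit ball, for scalar-valued functions. -/
def supNorm (f : ℓ2 → ℂ) : ℝ := ⨆ x : oB, ‖f (x : ℓ2)‖

/-- Supremum norm on the open unit ball, for `ℓ2`-valued functions. -/
def supNormV (g : ℓ2 → ℓ2) : ℝ := ⨆ x : oB, ‖g (x : ℓ2)‖

/-- Membership in `𝒜ᵤ(B)`: holomorphic on the open unit ball and uniformly continuous there. -/
def MemAu (f : ℓ2 → ℂ) : Prop :=
  DifferentiableOn ℂ f oB ∧ UniformContinuousOn f oB

/-- Membership in `ℋ^∞(B)`: holomorphic and bounded on the open unit ball. -/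
def MemHinf (f : ℓ2 → ℂ) : Prop :=
  DifferentiableOn ℂ f oB ∧ ∃ C, ∀ x ∈ oB, ‖f x‖ ≤ C

/-- Membership in `ℋ^∞(B,ℓ2)`: holomorphic and bounded on the open unit ball, `ℓ2`-valued. -/
def MemHinfV (g : ℓ2 → ℓ2) : Prop :=
  DifferentiableOn ℂ g oB ∧ ∃ C, ∀ x ∈ oB, ‖g x‖ ≤ C

/-- `fext` is (a representative of) the unique continuous extension `f̃` of `f` to the
closed unit ball. -/
def IsExt (f fext : ℓ2 → ℂ) : Prop :=
  ContinuousOn fext cB ∧ Set.EqOn fext f oB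

/-- An element of the scalar-valued spectrum `ℳᵤ(B)`: a nonzero continuous `ℂ`-algebra
homomorphism `𝒜ᵤ(B) → ℂ`, encoded as a map on representatives. -/
structure MuHom where
  toFun : (ℓ2 → ℂ) → ℂ
  map_add : ∀ f g, MemAu f → MemAu g → toFun (f + g) = toFun f + toFun g
  map_mul : ∀ f g, MemAu f → MemAu g → toFun (f * g) = toFun f * toFun g
  map_smul : ∀ (c : ℂ) (f), MemAu f → toFun (c • f) = c * toFun f
  respects : ∀ f g, MemAu f → MemAu g → Set.EqOn f g oB → toFun f = toFun g
  nonzero : ∃ f, MemAu f ∧ toFun f ≠ 0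
  cont : ∃ C, ∀ f, MemAu f → ‖toFun f‖ ≤ C * supNorm f

/-- An element of the vector-valued spectrum `ℳ_{u,∞}(B,B)`: a nonzero continuous `ℂ`-algebra
homomorphism `𝒜ᵤ(B) → ℋ^∞(B)`, encoded as a map on representatives. -/
structure MuInfHom where
  toFun : (ℓ2 → ℂ) → (ℓ2 → ℂ)
  maps_mem : ∀ f, MemAu f → MemHinf (toFun f)
  map_add : ∀ f g, MemAu f → MemAu g → ∀ x ∈ oB, toFun (f + g) x = toFun f x + toFun g x
  map_mul : ∀ f g, MemAu f → MemAu g → ∀ x ∈ oB, toFun (f * g) x = toFun f x * toFun g x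
  map_smul : ∀ (c : ℂ) (f), MemAu f → ∀ x ∈ oB, toFun (c • f) x = c * toFun f x
  respects : ∀ f g, MemAu f → MemAu g → Set.EqOn f g oB → Set.EqOn (toFun f) (toFun g) oB
  nonzero : ∃ f, MemAu f ∧ ∃ x ∈ oB, toFun f x ≠ 0
  cont : ∃ C, ∀ f, MemAu f → ∀ x ∈ oB, ‖toFun f x‖ ≤ C * supNorm f

/-- An element of the scalar-valued spectrum `ℳ_∞(B)`: a nonzero continuous `ℂ`-algebra
homomorphism `ℋ^∞(B) → ℂ`, encoded as a map on representatives. -/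
structure MInfHom where
  toFun : (ℓ2 → ℂ) → ℂ
  map_add : ∀ f g, MemHinf f → MemHinf g → toFun (f + g) = toFun f + toFun g
  map_mul : ∀ f g, MemHinf f → MemHinf g → toFun (f * g) = toFun f * toFun g
  map_smul : ∀ (c : ℂ) (f), MemHinf f → toFun (c • f) = c * toFun f
  respects : ∀ f g, MemHinf f → MemHinf g → Set.EqOn f g oB → toFun f = toFun g
  nonzero : ∃ f, MemHinf f ∧ toFun f ≠ 0
  cont : ∃ C, ∀ f, MemHinf f → ‖toFun f‖ ≤ C * supNorm f

/-- `ξ(Φ) = g`: the projection of `Φ` is the function `g`, i.e. `Φ(⟨·,eₙ⟩)(x) = g(x)ₙ`. -/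
def xiEq (Φ : MuInfHom) (g : ℓ2 → ℓ2) : Prop :=
  ∀ x ∈ oB, ∀ n : ℕ, Φ.toFun (coord n) x = g x n

/-- `Φ = C_g`: `Φ` is the composition homomorphism `f ↦ f̃ ∘ g`. -/
def IsCompHom (Φ : MuInfHom) (g : ℓ2 → ℓ2) : Prop :=
  ∀ f fext, MemAu f → IsExt f fext → ∀ x ∈ oB, Φ.toFun f x = fext (g x)

/-- The open unit ball of `ℋ^∞(B,ℓ2)`. -/
def ballHV : Set (ℓ2 → ℓ2) := {h | MemHinfV h ∧ supNormV h < 1}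

/-- The open unit ball of `ℋ^∞(B)`. -/
def ballH : Set (ℓ2 → ℂ) := {h | MemHinf h ∧ supNorm h < 1}

/-- `F` is holomorphic on the open unit ball of `ℋ^∞(B,ℓ2)`: it is locally bounded there and
`ℂ`-differentiable along every complex line (which, for maps on a ball of a Banach space, is
equivalent to Fréchet holomorphy). -/
def HolomorphicOnBallHV (F : (ℓ2 → ℓ2) → ℂ) : Prop :=
  (∀ h ∈ ballHV, ∃ ε > 0, ∃ C, ∀ k ∈ ballHV, supNormV (k - h) < ε → ‖F k‖ ≤ C) ∧
  (∀ h ∈ ballHV, ∀ k, MemHinfV k →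
    DifferentiableOn ℂ (fun z : ℂ => F (h + z • k)) {z : ℂ | (h + z • k) ∈ ballHV})

/-- `F` is holomorphic on the open unit ball of `ℋ^∞(B)`: it is locally bounded there and
`ℂ`-differentiable along every complex line. -/
def HolomorphicOnBallH (F : (ℓ2 → ℂ) → ℂ) : Prop :=
  (∀ h ∈ ballH, ∃ ε > 0, ∃ C, ∀ k ∈ ballH, supNorm (k - h) < ε → ‖F k‖ ≤ C) ∧
  (∀ h ∈ ballH, ∀ k, MemHinf k →
    DifferentiableOn ℂ (fun z : ℂ => F (h + z • k)) {z : ℂ | (h + z • k) ∈ ballH})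

/-- `h ∈ 𝒞ℓ(f,g)` (with `fext = f̃` the continuous extension of `f` to the closed ball):
there is a net `(g_α)` in the open unit ball of `ℋ^∞(B,ℓ2)` converging weak-star to `g`
(pointwise weak convergence of values) with `f̃(g_α(y)) → h(y)` for every `y ∈ B`. -/
def InCluster (fext : ℓ2 → ℂ) (g : ℓ2 → ℓ2) (h : ℓ2 → ℂ) : Prop :=
  ∃ (ι : Type) (l : Filter ι), l.NeBot ∧ ∃ gA : ι → ℓ2 → ℓ2,
    (∀ i, gA i ∈ ballHV) ∧
    (∀ y ∈ oB, ∀ u : ℓ2,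
      Filter.Tendsto (fun i => (inner ℂ (gA i y) u : ℂ)) l (nhds (inner ℂ (g y) u))) ∧
    (∀ y ∈ oB, Filter.Tendsto (fun i => fext (gA i y)) l (nhds (h y)))

namespace S5
lemma zero_mem_oB : (0 : ℓ2) ∈ oB := by simp [oB]
instance : Nonempty oB := ⟨⟨0, zero_mem_oB⟩⟩
lemma mem_oB {z : ℓ2} : z ∈ oB ↔ ‖z‖ < 1 := mem_ball_zero_iff
lemma supNorm_le {f : ℓ2 → ℂ} {B : ℝ} (hB : ∀ z ∈ oB, ‖f z‖ ≤ B) : supNorm f ≤ B :=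
  ciSup_le fun z => hB z z.2
lemma supNorm_nonneg (f : ℓ2 → ℂ) : 0 ≤ supNorm f :=
  Real.iSup_nonneg fun _ => norm_nonneg _

/-- A uniformly continuous function on the unit ball of a normed space is bounded. -/
lemma bounded_of_uc {E : Type*} [NormedAddCommGroup E] [NormedSpace ℝ E] {f : E → ℂ}
    (hf : UniformContinuousOn f (Metric.ball (0:E) 1)) :
    ∃ M, 0 ≤ M ∧ ∀ z ∈ Metric.ball (0:E) 1, ‖f z‖ ≤ M := by
  rw [Metric.uniformContinuousOn_iff] at hf
  obtain ⟨δ, hδ, H⟩ := hf 1 one_pos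
  have key : ∀ j : ℕ, ∀ z ∈ Metric.ball (0:E) 1, ‖z‖ ≤ j * (δ/2) → ‖f z‖ ≤ ‖f 0‖ + j := by
    intro j
    induction j with
    | zero =>
      intro z hz h0
      have : z = 0 := by
        rw [← norm_le_zero_iff]; simpa using h0
      simp [this]
    | succ j ih =>
      intro z hz hn
      by_cases hsmall : ‖z‖ ≤ j * (δ/2)
      · refine (ih z hz hsmall).trans ?_
        push_cast; linarith
      · push_neg at hsmall
        by_cases hz2 : ‖z‖ ≤ δ/2
        · have h0B : (0:E) ∈ Metric.ball (0:E) 1 := by simp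
          have := H z hz 0 h0B (by simpa [dist_zero_right] using lt_of_le_of_lt hz2 (by linarith))
          rw [dist_eq_norm] at this
          have : ‖f z‖ ≤ ‖f 0‖ + 1 := by
            have := norm_sub_norm_le (f z) (f 0)
            linarith [this.trans (le_of_lt ‹‖f z - f 0‖ < 1›)]
          refine this.trans ?_
          push_cast
          have : (0:ℝ) ≤ j := Nat.cast_nonneg j
          linarith
        · push_neg at hz2
          set t : ℝ := (‖z‖ - δ/2)/‖z‖ with ht
          have hzpos : (0:ℝ) < ‖z‖ := lt_trans (by positivity) hz2
          have ht0 : 0 ≤ t := by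
            apply div_nonneg _ hzpos.le; linarith
          have ht1 : t ≤ 1 := by
            rw [div_le_one hzpos]; linarith
          set w : E := t • z with hw
          have hwn : ‖w‖ = ‖z‖ - δ/2 := by
            rw [hw, norm_smul, Real.norm_eq_abs, abs_of_nonneg ht0, ht,
              div_mul_cancel₀ _ hzpos.ne']
          have hwB : w ∈ Metric.ball (0:E) 1 := by
            rw [mem_ball_zero_iff, hwn]
            have : ‖z‖ < 1 := mem_ball_zero_iff.mp hz
            linarith
          have hdist : dist z w < δ := by
            have hzw : z - t • z = (1 - t) • z := by rw [sub_smul, one_smul]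
            have hval : (1 - t) * ‖z‖ = δ/2 := by
              rw [ht]; field_simp; ring
            rw [dist_eq_norm, hw, hzw, norm_smul, Real.norm_eq_abs,
              abs_of_nonneg (by linarith : (0:ℝ) ≤ 1 - t), hval]
            linarith
          have hstep := H z hz w hwB hdist
          rw [dist_eq_norm] at hstep
          push_cast at hn
          have hfw : ‖f w‖ ≤ ‖f 0‖ + j := by
            apply ih w hwB
            rw [hwn]; linarith
          have := norm_sub_norm_le (f z) (f w)
          push_cast
          linarith [this.trans hstep.le]
  refine ⟨max (‖f 0‖ + (⌈2/δ⌉₊ : ℝ)) 0, le_max_right _ _, fun z hz => ?_⟩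
  refine le_max_of_le_left (key ⌈2/δ⌉₊ z hz ?_)
  have h1 : ‖z‖ < 1 := mem_ball_zero_iff.mp hz
  have h2 : (2/δ : ℝ) ≤ (⌈2/δ⌉₊ : ℝ) := Nat.le_ceil _
  have : (1:ℝ) ≤ (⌈2/δ⌉₊:ℝ) * (δ/2) := by
    calc (1:ℝ) = (2/δ) * (δ/2) := by field_simp
    _ ≤ _ := by
      apply mul_le_mul_of_nonneg_right h2; positivity
  linarith

end S5


-- MemAu closure lemmas
lemma UniformContinuous.uco {α β : Type*} [UniformSpace α] [UniformSpace β] {f : α → β}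
    (h : UniformContinuous f) (s : Set α) : UniformContinuousOn f s :=
  Filter.Tendsto.mono_left h inf_le_left

lemma memAu_const (c : ℂ) : MemAu (fun _ : ℓ2 => c) :=
  ⟨differentiableOn_const c, uniformContinuous_const.uco oB⟩

lemma memAu_one : MemAu (1 : ℓ2 → ℂ) := memAu_const 1

protected lemma MemAu.add {f g : ℓ2 → ℂ} (hf : MemAu f) (hg : MemAu g) : MemAu (f + g) := by
  refine ⟨hf.1.add hg.1, ?_⟩
  have hfu := Metric.uniformContinuousOn_iff.mp hf.2
  have hgu := Metric.uniformContinuousOn_iff.mp hg.2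
  rw [Metric.uniformContinuousOn_iff]
  intro ε hε
  obtain ⟨δ₁, hδ₁, H₁⟩ := hfu (ε/2) (by linarith)
  obtain ⟨δ₂, hδ₂, H₂⟩ := hgu (ε/2) (by linarith)
  refine ⟨min δ₁ δ₂, lt_min hδ₁ hδ₂, fun a ha b hb hab => ?_⟩
  have h1 := H₁ a ha b hb (hab.trans_le (min_le_left _ _))
  have h2 := H₂ a ha b hb (hab.trans_le (min_le_right _ _))
  simp only [Pi.add_apply, dist_eq_norm] at *
  calc ‖f a + g a - (f b + g b)‖ = ‖(f a - f b) + (g a - g b)‖ := by ring_nf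
  _ ≤ ‖f a - f b‖ + ‖g a - g b‖ := norm_add_le _ _
  _ < ε := by linarith

protected lemma MemAu.smul {f : ℓ2 → ℂ} (c : ℂ) (hf : MemAu f) : MemAu (c • f) := by
  refine ⟨hf.1.const_smul c, ?_⟩
  have hfu := Metric.uniformContinuousOn_iff.mp hf.2
  rw [Metric.uniformContinuousOn_iff]
  intro ε hε
  obtain ⟨δ, hδ, H⟩ := hfu (ε/(‖c‖+1)) (by positivity)
  refine ⟨δ, hδ, fun a ha b hb hab => ?_⟩
  have h1 := H a ha b hb hab
  simp only [Pi.smul_apply, smul_eq_mul, dist_eq_norm, ← mul_sub, norm_mul] at *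
  calc ‖c‖ * ‖f a - f b‖ ≤ ‖c‖ * (ε/(‖c‖+1)) := by
        apply mul_le_mul_of_nonneg_left h1.le (norm_nonneg _)
  _ < ε := by
        rw [mul_div_assoc']
        rw [div_lt_iff₀ (by positivity)]
        nlinarith [norm_nonneg c]

protected lemma MemAu.sub {f g : ℓ2 → ℂ} (hf : MemAu f) (hg : MemAu g) : MemAu (f - g) := by
  have : f - g = f + (-1 : ℂ) • g := by funext z; simp; ring
  rw [this]; exact hf.add (hg.smul (-1))

protected lemma MemAu.bddAbove {f : ℓ2 → ℂ} (hf : MemAu f) : ∃ M, 0 ≤ M ∧ ∀ z ∈ oB, ‖f z‖ ≤ M :=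
  S5.bounded_of_uc hf.2

protected lemma MemAu.mul {f g : ℓ2 → ℂ} (hf : MemAu f) (hg : MemAu g) : MemAu (f * g) := by
  refine ⟨hf.1.mul hg.1, ?_⟩
  obtain ⟨Mf, hMf0, hMf⟩ := hf.bddAbove
  obtain ⟨Mg, hMg0, hMg⟩ := hg.bddAbove
  have hfu := Metric.uniformContinuousOn_iff.mp hf.2
  have hgu := Metric.uniformContinuousOn_iff.mp hg.2
  rw [Metric.uniformContinuousOn_iff]
  intro ε hε
  obtain ⟨δ₁, hδ₁, H₁⟩ := hfu (ε/(2*(Mg+1))) (by positivity)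
  obtain ⟨δ₂, hδ₂, H₂⟩ := hgu (ε/(2*(Mf+1))) (by positivity)
  refine ⟨min δ₁ δ₂, lt_min hδ₁ hδ₂, fun a ha b hb hab => ?_⟩
  have h1 := H₁ a ha b hb (hab.trans_le (min_le_left _ _))
  have h2 := H₂ a ha b hb (hab.trans_le (min_le_right _ _))
  simp only [Pi.mul_apply, dist_eq_norm] at *
  have key : f a * g a - f b * g b = f a * (g a - g b) + g b * (f a - f b) := by ring
  rw [key]
  calc ‖f a * (g a - g b) + g b * (f a - f b)‖
      ≤ ‖f a‖ * ‖g a - g b‖ + ‖g b‖ * ‖f a - f b‖ := by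
        refine (norm_add_le _ _).trans ?_
        rw [norm_mul, norm_mul]
  _ ≤ Mf * (ε/(2*(Mf+1))) + Mg * (ε/(2*(Mg+1))) := by
        have := hMf a ha; have := hMg b hb
        have : ‖f a‖ * ‖g a - g b‖ ≤ Mf * (ε/(2*(Mf+1))) :=
          mul_le_mul (hMf a ha) h2.le (norm_nonneg _) hMf0
        have : ‖g b‖ * ‖f a - f b‖ ≤ Mg * (ε/(2*(Mg+1))) :=
          mul_le_mul (hMg b hb) h1.le (norm_nonneg _) hMg0
        linarith [mul_le_mul (hMf a ha) h2.le (norm_nonneg _) hMf0]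
  _ < ε := by
        have h3 : Mf * (ε/(2*(Mf+1))) < ε/2 := by
          rw [mul_div_assoc', div_lt_iff₀ (by positivity)]
          nlinarith
        have h4 : Mg * (ε/(2*(Mg+1))) < ε/2 := by
          rw [mul_div_assoc', div_lt_iff₀ (by positivity)]
          nlinarith
        linarith

protected lemma MemAu.pow {f : ℓ2 → ℂ} (hf : MemAu f) : ∀ k : ℕ, MemAu (f ^ k)
  | 0 => by
      have : f ^ 0 = (1 : ℓ2 → ℂ) := by funext z; simp
      rw [this]; exact memAu_one
  | (k+1) => by
      have : f ^ (k+1) = f ^ k * f := by rw [pow_succ]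
      rw [this]; exact (hf.pow k).mul hf

/-- coordinate functional as a continuous linear map -/
def coordL (n : ℕ) : ℓ2 →L[ℂ] ℂ :=
  LinearMap.mkContinuous
    { toFun := fun z => z n
      map_add' := fun a b => by simp
      map_smul' := fun c a => by simp }
    1 (fun z => by show ‖z n‖ ≤ 1 * ‖z‖; simpa using lp.norm_apply_le_norm (by norm_num) z n)

lemma memAu_clm (L : ℓ2 →L[ℂ] ℂ) : MemAu ⇑L :=
  ⟨L.differentiable.differentiableOn, L.uniformContinuous.uco oB⟩

lemma memAu_coord (n : ℕ) : MemAu (coord n) := memAu_clm (coordL n)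



namespace S5

lemma memAu_inner (w : ℓ2) : MemAu (fun z => (inner ℂ w z : ℂ)) :=
  memAu_clm (innerSL ℂ w)

section Psi
variable (Φ : MuInfHom) {x : ℓ2}

lemma psi_congr (hx : x ∈ oB) {a b : ℓ2 → ℂ} (ha : MemAu a) (hb : MemAu b) (h : Set.EqOn a b oB) :
    Φ.toFun a x = Φ.toFun b x := Φ.respects a b ha hb h hx

lemma psi_add (hx : x ∈ oB) {a b : ℓ2 → ℂ} (ha : MemAu a) (hb : MemAu b) :
    Φ.toFun (a + b) x = Φ.toFun a x + Φ.toFun b x := Φ.map_add a b ha hb x hx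

lemma psi_sub (hx : x ∈ oB) {a b : ℓ2 → ℂ} (ha : MemAu a) (hb : MemAu b) :
    Φ.toFun (a - b) x = Φ.toFun a x - Φ.toFun b x := by
  have h1 : MemAu (a - b) := ha.sub hb
  have h2 := psi_add Φ hx h1 hb
  have h3 : Φ.toFun ((a-b)+b) x = Φ.toFun a x := by
    apply psi_congr Φ hx (h1.add hb) ha
    intro z _; simp
  rw [h3] at h2
  linear_combination -h2

lemma psi_const (hx : x ∈ oB) (c : ℂ) : Φ.toFun (fun _ => c) x = c * Φ.toFun 1 x := by
  have h : (fun _ : ℓ2 => c) = c • (1 : ℓ2 → ℂ) := by funext z; simp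
  rw [h]
  exact Φ.map_smul c 1 memAu_one x hx

lemma psi_zero (hx : x ∈ oB) : Φ.toFun (fun _ => (0:ℂ)) x = 0 := by
  rw [psi_const Φ hx 0, zero_mul]

lemma psi_finset (hx : x ∈ oB) (p : ℓ2) (s : Finset ℕ) :
    Φ.toFun (fun z => (inner ℂ ((∑ n ∈ s, lp.single 2 n (p n) : ℓ2)) z : ℂ)) x
      = ∑ n ∈ s, (starRingEnd ℂ) (p n) * Φ.toFun (coord n) x := by
  classical
  induction s using Finset.induction_on with
  | empty =>
      simp only [Finset.sum_empty]
      have h : (fun z : ℓ2 => (inner ℂ (0:ℓ2) z : ℂ)) = (fun _ : ℓ2 => (0:ℂ)) := by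
        funext z; simp
      rw [h, psi_zero Φ hx]
  | @insert a s' ha ih =>
      have hsum : (fun z : ℓ2 => (inner ℂ ((∑ n ∈ insert a s', lp.single 2 n (p n) : ℓ2)) z : ℂ))
          = (fun z : ℓ2 => (inner ℂ (lp.single 2 a (p a) : ℓ2) z : ℂ))
            + fun z : ℓ2 => (inner ℂ ((∑ n ∈ s', lp.single 2 n (p n) : ℓ2)) z : ℂ) := by
        funext z
        rw [Finset.sum_insert ha]
        simp [inner_add_left]
      rw [hsum, psi_add Φ hx (memAu_inner _) (memAu_inner _), ih,
        Finset.sum_insert ha]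
      congr 1
      have hsingle : (fun z : ℓ2 => (inner ℂ (lp.single 2 a (p a) : ℓ2) z : ℂ))
          = ((starRingEnd ℂ) (p a)) • coord a := by
        funext z
        rw [lp.inner_single_left]
        simp [coord, RCLike.inner_apply]
        ring
      rw [hsingle]
      exact Φ.map_smul _ _ (memAu_coord a) x hx

end Psi
end S5


namespace S5
section PsiInner
variable (Φ : MuInfHom) {x : ℓ2}

lemma psi_inner (hx : x ∈ oB) (T : ℓ2 →ₗᵢ[ℂ] ℓ2) (hΦ : xiEq Φ (fun x => T x)) (p : ℓ2) :
    Φ.toFun (fun z => (inner ℂ p z : ℂ)) x = (inner ℂ p (T x) : ℂ) := by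
  obtain ⟨C, hC⟩ := Φ.cont
  set P : ℕ → ℓ2 := fun N => ∑ n ∈ Finset.range N, lp.single 2 n (p n) with hP
  have hsum : Filter.Tendsto P Filter.atTop (nhds p) :=
    (lp.hasSum_single ENNReal.ofNat_ne_top p).tendsto_sum_nat
  have hBval : ∀ N, Φ.toFun (fun z => (inner ℂ (P N) z : ℂ)) x = (inner ℂ (P N) (T x) : ℂ) := by
    intro N
    rw [psi_finset Φ hx p (Finset.range N)]
    rw [sum_inner]
    apply Finset.sum_congr rfl
    intro n _
    rw [hΦ x hx n, lp.inner_single_left]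
    simp [RCLike.inner_apply]
    ring
  have hdist : ∀ N, ‖Φ.toFun (fun z => (inner ℂ p z : ℂ)) x
      - Φ.toFun (fun z => (inner ℂ (P N) z : ℂ)) x‖ ≤ |C| * ‖p - P N‖ := by
    intro N
    rw [← psi_sub Φ hx (memAu_inner p) (memAu_inner (P N))]
    have hfun : (fun z => (inner ℂ p z : ℂ)) - (fun z => (inner ℂ (P N) z : ℂ))
        = fun z => (inner ℂ (p - P N) z : ℂ) := by
      funext z; simp [inner_sub_left]
    rw [hfun]
    calc ‖Φ.toFun (fun z => (inner ℂ (p - P N) z : ℂ)) x‖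
        ≤ C * supNorm (fun z => (inner ℂ (p - P N) z : ℂ)) := hC _ (memAu_inner _) x hx
    _ ≤ |C| * ‖p - P N‖ := by
        apply mul_le_mul (le_abs_self C) _ (supNorm_nonneg _) (abs_nonneg _)
        apply supNorm_le
        intro z hz
        calc ‖(inner ℂ (p - P N) z : ℂ)‖ ≤ ‖p - P N‖ * ‖z‖ := norm_inner_le_norm _ _
        _ ≤ ‖p - P N‖ * 1 := by
            apply mul_le_mul_of_nonneg_left (le_of_lt (mem_oB.mp hz)) (norm_nonneg _)
        _ = ‖p - P N‖ := mul_one _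
  have h1 : Filter.Tendsto (fun N => (inner ℂ (P N) (T x) : ℂ)) Filter.atTop
      (nhds (inner ℂ p (T x) : ℂ)) := by
    have hcont : Continuous (fun w : ℓ2 => (inner ℂ w (T x) : ℂ)) :=
      Continuous.inner continuous_id continuous_const
    exact (hcont.tendsto p).comp hsum
  have h2 : Filter.Tendsto (fun N => (inner ℂ (P N) (T x) : ℂ)) Filter.atTop
      (nhds (Φ.toFun (fun z => (inner ℂ p z : ℂ)) x)) := by
    rw [tendsto_iff_norm_sub_tendsto_zero]
    have hz : Filter.Tendsto (fun N => |C| * ‖p - P N‖) Filter.atTop (nhds 0) := by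
      have : Filter.Tendsto (fun N => ‖p - P N‖) Filter.atTop (nhds 0) := by
        have hc : Continuous (fun w : ℓ2 => ‖p - w‖) := (continuous_const.sub continuous_id).norm
        have := (hc.tendsto p).comp hsum
        simpa [Function.comp_def] using this
      have := this.const_mul |C|
      simpa using this
    apply squeeze_zero (fun N => norm_nonneg _) _ hz
    intro N
    rw [← hBval N, norm_sub_rev]
    exact hdist N
  exact tendsto_nhds_unique h2 h1

end PsiInner
end S5


namespace S5

lemma uc_dslope {q : ℂ → ℂ} {c : ℂ} (hc : c ∈ Metric.ball (0:ℂ) 1)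
    (hq : DifferentiableOn ℂ q (Metric.ball (0:ℂ) 1))
    (huc : UniformContinuousOn q (Metric.ball (0:ℂ) 1)) :
    UniformContinuousOn (dslope q c) (Metric.ball (0:ℂ) 1) := by
  obtain ⟨Mq, hMq0, hMq⟩ := bounded_of_uc (E := ℂ) huc
  have hc1 : ‖c‖ < 1 := mem_ball_zero_iff.mp hc
  set d : ℝ := (1 - ‖c‖)/4 with hd
  have hd0 : 0 < d := by rw [hd]; linarith
  have hscont : ContinuousOn (dslope q c) (Metric.ball (0:ℂ) 1) := by
    rw [continuousOn_dslope (isOpen_ball.mem_nhds hc)]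
    exact ⟨hq.continuousOn, hq.differentiableAt (isOpen_ball.mem_nhds hc)⟩
  have hsub : Metric.closedBall c (2*d) ⊆ Metric.ball (0:ℂ) 1 := by
    intro w hw
    rw [Metric.mem_closedBall] at hw
    rw [mem_ball_zero_iff]
    have : ‖w‖ ≤ dist w c + ‖c‖ := by
      rw [dist_eq_norm]
      calc ‖w‖ = ‖(w - c) + c‖ := by ring_nf
      _ ≤ ‖w - c‖ + ‖c‖ := norm_add_le _ _
    rw [hd] at hw
    linarith
  have hUC1 := ((isCompact_closedBall c (2*d)).uniformContinuousOn_of_continuous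
    (hscont.mono hsub))
  rw [Metric.uniformContinuousOn_iff] at hUC1 huc ⊢
  intro ε hε
  obtain ⟨δ₁, hδ₁, H₁⟩ := hUC1 ε hε
  obtain ⟨δq, hδq, Hq⟩ := huc (ε * d^2/8) (by positivity)
  set δ₂ : ℝ := min δq (ε * d^2/(8*Mq + 1)) with hδ₂def
  have hδ₂ : 0 < δ₂ := lt_min hδq (by positivity)
  refine ⟨min (min δ₁ δ₂) d, by positivity, ?_⟩
  intro a ha b hb hab
  have hab₁ : dist a b < δ₁ := hab.trans_le ((min_le_left _ _).trans (min_le_left _ _))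
  have hab₂ : dist a b < δ₂ := hab.trans_le ((min_le_left _ _).trans (min_le_right _ _))
  have habd : dist a b < d := hab.trans_le (min_le_right _ _)
  by_cases hcase : dist a c < d ∨ dist b c < d
  · -- both points near c; use compact-region uniform continuity
    have haS : a ∈ Metric.closedBall c (2*d) ∧ b ∈ Metric.closedBall c (2*d) := by
      rcases hcase with h | h
      · constructor
        · rw [Metric.mem_closedBall]; linarith
        · rw [Metric.mem_closedBall]
          calc dist b c ≤ dist b a + dist a c := dist_triangle _ _ _
          _ ≤ d + d := by rw [dist_comm b a]; linarith
          _ = 2*d := by ring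
      · constructor
        · rw [Metric.mem_closedBall]
          calc dist a c ≤ dist a b + dist b c := dist_triangle _ _ _
          _ ≤ d + d := by linarith
          _ = 2*d := by ring
        · rw [Metric.mem_closedBall]; linarith
    exact H₁ a haS.1 b haS.2 hab₁
  · push_neg at hcase
    obtain ⟨hda, hdb⟩ := hcase
    have hA0 : a ≠ c := by
      intro h; rw [h] at hda; simp at hda; linarith
    have hB0 : b ≠ c := by
      intro h; rw [h] at hdb; simp at hdb; linarith
    rw [dist_eq_norm, dslope_of_ne q hA0, dslope_of_ne q hB0, slope_def_field,
      slope_def_field]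
    have hAc : a - c ≠ 0 := sub_ne_zero.mpr hA0
    have hBc : b - c ≠ 0 := sub_ne_zero.mpr hB0
    have key : (q a - q c)/(a - c) - (q b - q c)/(b - c)
        = ((q a - q b)*(b - c) + (q b - q c)*(b - a)) / ((a-c)*(b-c)) := by
      field_simp
      ring
    rw [key, norm_div]
    have hden : d^2 ≤ ‖(a-c)*(b-c)‖ := by
      rw [norm_mul]
      calc d^2 = d * d := sq d
      _ ≤ ‖a-c‖ * ‖b-c‖ := by
          apply mul_le_mul _ _ hd0.le (norm_nonneg _)
          · rw [← dist_eq_norm]; exact hda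
          · rw [← dist_eq_norm]; exact hdb
    have hnum : ‖(q a - q b)*(b - c) + (q b - q c)*(b - a)‖ ≤ ε * d^2 / 2 := by
      have h1 : ‖q a - q b‖ < ε * d^2/8 := by
        rw [← dist_eq_norm]
        exact Hq a ha b hb (hab₂.trans_le (min_le_left _ _))
      have h2 : ‖b - c‖ ≤ 2 := by
        calc ‖b - c‖ ≤ ‖b‖ + ‖c‖ := norm_sub_le _ _
        _ ≤ 2 := by
            have := mem_ball_zero_iff.mp hb
            linarith
      have h3 : ‖q b - q c‖ ≤ 2 * Mq := by
        calc ‖q b - q c‖ ≤ ‖q b‖ + ‖q c‖ := norm_sub_le _ _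
        _ ≤ 2 * Mq := by
            have := hMq b hb
            have := hMq c hc
            linarith
      have h4 : ‖b - a‖ < δ₂ := by rw [← dist_eq_norm, dist_comm]; exact hab₂
      calc ‖(q a - q b)*(b - c) + (q b - q c)*(b - a)‖
          ≤ ‖q a - q b‖ * ‖b - c‖ + ‖q b - q c‖ * ‖b - a‖ := by
            refine (norm_add_le _ _).trans ?_
            rw [norm_mul, norm_mul]
      _ ≤ (ε * d^2/8) * 2 + (2*Mq) * δ₂ := by
            have e1 : ‖q a - q b‖ * ‖b - c‖ ≤ (ε * d^2/8) * 2 :=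
              mul_le_mul h1.le h2 (norm_nonneg _) (by positivity)
            have e2 : ‖q b - q c‖ * ‖b - a‖ ≤ (2*Mq) * δ₂ :=
              mul_le_mul h3 h4.le (norm_nonneg _) (by positivity)
            linarith
      _ ≤ ε * d^2 / 2 := by
            have e3 : (2*Mq) * δ₂ ≤ (2*Mq) * (ε * d^2/(8*Mq + 1)) := by
              apply mul_le_mul_of_nonneg_left (min_le_right _ _) (by positivity)
            have e4 : (2*Mq) * (ε * d^2/(8*Mq + 1)) ≤ ε * d^2 / 4 := by
              rw [mul_div_assoc', div_le_div_iff₀ (by positivity) (by norm_num)]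
              nlinarith [sq_nonneg d, mul_pos hε (by positivity : (0:ℝ) < d^2)]
            linarith
    calc ‖(q a - q b)*(b - c) + (q b - q c)*(b - a)‖ / ‖(a-c)*(b-c)‖
        ≤ ‖(q a - q b)*(b - c) + (q b - q c)*(b - a)‖ / d^2 := by
          apply div_le_div_of_nonneg_left (norm_nonneg _) (by positivity) hden
    _ < ε := by
          rw [div_lt_iff₀ (by positivity)]
          have : (0:ℝ) < ε * d^2 := by positivity
          linarith

end S5


namespace S5

lemma psi_pow (Φ : MuInfHom) {x : ℓ2} (hx : x ∈ oB) (hone : Φ.toFun 1 x = 1)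
    {g : ℓ2 → ℂ} (hg : MemAu g) : ∀ m : ℕ, Φ.toFun (g ^ m) x = (Φ.toFun g x) ^ m
  | 0 => by rw [pow_zero, pow_zero, hone]
  | (m+1) => by
      rw [pow_succ, Φ.map_mul _ _ (hg.pow m) hg x hx, psi_pow Φ hx hone hg m, pow_succ]

lemma inner_mem_ball {p : ℓ2} (hpn : ‖p‖ = 1) {z : ℓ2} (hz : z ∈ oB) :
    (inner ℂ p z : ℂ) ∈ Metric.ball (0:ℂ) 1 := by
  rw [mem_ball_zero_iff]
  calc ‖(inner ℂ p z : ℂ)‖ ≤ ‖p‖ * ‖z‖ := norm_inner_le_norm _ _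
  _ = ‖z‖ := by rw [hpn, one_mul]
  _ < 1 := mem_oB.mp hz

lemma memAu_comp_inner {p : ℓ2} (hpn : ‖p‖ = 1) {g : ℂ → ℂ}
    (hgd : DifferentiableOn ℂ g (Metric.ball (0:ℂ) 1))
    (hgu : UniformContinuousOn g (Metric.ball (0:ℂ) 1)) :
    MemAu (fun z => g ((inner ℂ p z : ℂ))) := by
  constructor
  · exact DifferentiableOn.comp hgd ((memAu_inner p).1) (fun z hz => inner_mem_ball hpn hz)
  · rw [Metric.uniformContinuousOn_iff]
    intro ε hε
    obtain ⟨δ, hδ, H⟩ := Metric.uniformContinuousOn_iff.mp hgu ε hε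
    refine ⟨δ, hδ, fun a ha b hb hab => ?_⟩
    apply H _ (inner_mem_ball hpn ha) _ (inner_mem_ball hpn hb)
    have : dist (inner ℂ p a : ℂ) (inner ℂ p b : ℂ) ≤ dist a b := by
      rw [dist_eq_norm, dist_eq_norm, ← inner_sub_right]
      calc ‖(inner ℂ p (a - b) : ℂ)‖ ≤ ‖p‖ * ‖a - b‖ := norm_inner_le_norm _ _
      _ = ‖a - b‖ := by rw [hpn, one_mul]
    exact lt_of_le_of_lt this hab

lemma norm_sub_proj_sq {p : ℓ2} (hpn : ‖p‖ = 1) (z : ℓ2) :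
    ‖z - (inner ℂ p z : ℂ) • p‖^2 = ‖z‖^2 - ‖(inner ℂ p z : ℂ)‖^2 := by
  have h := norm_sub_sq (𝕜 := ℂ) z ((inner ℂ p z : ℂ) • p)
  rw [inner_smul_right] at h
  have h2 : (inner ℂ z p : ℂ) = (starRingEnd ℂ) (inner ℂ p z : ℂ) := (inner_conj_symm z p).symm
  rw [h2] at h
  have h3 : RCLike.re ((inner ℂ p z : ℂ) * (starRingEnd ℂ) (inner ℂ p z : ℂ)) = ‖(inner ℂ p z : ℂ)‖^2 := by
    rw [RCLike.mul_conj]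
    norm_cast
  have h4 : ‖(inner ℂ p z : ℂ) • p‖^2 = ‖(inner ℂ p z : ℂ)‖^2 := by
    rw [norm_smul, hpn, mul_one]
  rw [h3, h4] at h
  rw [h]; ring

end S5


namespace S5

set_option maxHeartbeats 2000000 in
lemma shell (T : ℓ2 →ₗᵢ[ℂ] ℓ2) (Φ : MuInfHom) (hΦ : xiEq Φ (fun x => T x))
    {f : ℓ2 → ℂ} (hf : MemAu f) {ε : ℝ} (hε : 0 < ε) :
    ∃ ρ : ℝ, 0 < ρ ∧ ρ < 1 ∧ ∀ x ∈ oB, ρ < ‖x‖ → ‖Φ.toFun f x - f (T x)‖ ≤ ε := by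
  classical
  obtain ⟨C₀, hC₀⟩ := Φ.cont
  set C := max C₀ 1 with hC
  have hC1 : (1:ℝ) ≤ C := le_max_right _ _
  have hC0 : (0:ℝ) < C := lt_of_lt_of_le one_pos hC1
  have hCb : ∀ g, MemAu g → ∀ y ∈ oB, ‖Φ.toFun g y‖ ≤ C * supNorm g := by
    intro g hg y hy
    exact (hC₀ g hg y hy).trans
      (mul_le_mul_of_nonneg_right (le_max_left _ _) (supNorm_nonneg _))
  obtain ⟨M, hM0, hM⟩ := hf.bddAbove
  set ε₁ := ε / (8 * C) with hε₁def
  have hε₁ : 0 < ε₁ := by positivity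
  obtain ⟨δ, hδ0, Hδ⟩ := Metric.uniformContinuousOn_iff.mp hf.2 ε₁ hε₁
  set η := min (1/2 : ℝ) (δ^2/4) with hηdef
  have hη0 : 0 < η := lt_min (by norm_num) (by positivity)
  have hη2 : η ≤ 1/2 := min_le_left _ _
  have hηδ : 2 * η ≤ δ^2/2 := by
    have := min_le_right (1/2 : ℝ) (δ^2/4)
    linarith
  obtain ⟨k₀, hk₀⟩ := exists_pow_lt_of_lt_one
    (show 0 < ε₁/(2*M+1) by positivity) (show 1 - η < 1 by linarith)
  set k := k₀ + 1 with hkdef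
  have hk1 : 1 ≤ k := Nat.le_add_left _ _
  have h1η0 : (0:ℝ) ≤ 1 - η := by linarith
  have hkpow : (1-η)^k < ε₁/(2*M+1) := by
    have : (1-η)^k ≤ (1-η)^k₀ :=
      pow_le_pow_of_le_one h1η0 (by linarith) (Nat.le_add_right _ _)
    linarith
  set ρ := 1 - 1/(2*(k:ℝ)) with hρdef
  have hkR : (1:ℝ) ≤ (k:ℝ) := by exact_mod_cast hk1
  have hk0' : (k:ℝ) ≠ 0 := by linarith
  have hρhalf : (1:ℝ)/2 ≤ ρ := by
    rw [hρdef]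
    have : 1/(2*(k:ℝ)) ≤ 1/2 := by
      apply div_le_div_of_nonneg_left (by norm_num) (by norm_num) (by linarith)
    linarith
  have hρ1 : ρ < 1 := by
    rw [hρdef]
    have : 0 < 1/(2*(k:ℝ)) := by positivity
    linarith
  have hρpow : (1:ℝ)/2 ≤ ρ^k := by
    have h := one_add_mul_le_pow (a := -(1/(2*(k:ℝ))))
      (by
        have : 0 < 1/(2*(k:ℝ)) := by positivity
        have : 1/(2*(k:ℝ)) ≤ 1/2 := by
          apply div_le_div_of_nonneg_left (by norm_num) (by norm_num) (by linarith)
        linarith) k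
    have e1 : 1 + (k:ℝ) * (-(1/(2*(k:ℝ)))) = 1/2 := by
      field_simp
      ring
    have e2 : (1 + (-(1/(2*(k:ℝ))))) = ρ := by rw [hρdef]; ring
    rw [e1, e2] at h
    exact h
  refine ⟨ρ, lt_of_lt_of_le one_half_pos hρhalf, hρ1, ?_⟩
  intro x hx hρx
  have hxn1 : ‖x‖ < 1 := mem_oB.mp hx
  have hxpos : (0:ℝ) < ‖x‖ := lt_trans (lt_of_lt_of_le one_half_pos hρhalf) hρx
  have hTxn : ‖T x‖ = ‖x‖ := T.norm_map x
  set lam : ℂ := ((‖x‖ : ℝ) : ℂ) with hlamdef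
  have hlamnorm : ‖lam‖ = ‖x‖ := by
    rw [hlamdef]; simp
  have hlamne : lam ≠ 0 := by
    rw [hlamdef]
    exact Complex.ofReal_ne_zero.mpr (by positivity)
  set p : ℓ2 := lam⁻¹ • T x with hpdef
  have hpn : ‖p‖ = 1 := by
    rw [hpdef, norm_smul, norm_inv, hlamnorm, hTxn]
    field_simp
  have hlamp : lam • p = T x := by
    rw [hpdef, smul_smul, mul_inv_cancel₀ hlamne, one_smul]
  set u : ℓ2 → ℂ := fun z => (inner ℂ p z : ℂ) with hudef
  have humem : MemAu u := memAu_inner p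
  have hpsiu : Φ.toFun u x = lam := by
    rw [hudef, psi_inner Φ hx T hΦ p]
    have e : (inner ℂ p (T x) : ℂ) = lam⁻¹ * lam^2 := by
      rw [hpdef, inner_smul_left, inner_self_eq_norm_sq_to_K, hTxn, map_inv₀,
        hlamdef, Complex.conj_ofReal]
      norm_num
    rw [e]
    field_simp
  have hTx0 : T x ≠ 0 := by
    intro h0
    have : ‖T x‖ = 0 := by rw [h0, norm_zero]
    rw [hTxn] at this; linarith
  obtain ⟨n₀, hn₀⟩ : ∃ n, (T x) n ≠ 0 := by
    by_contra hcon
    push_neg at hcon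
    apply hTx0
    ext n
    simpa using hcon n
  have hone : Φ.toFun 1 x = 1 := by
    have h1 := Φ.map_mul (coord n₀) 1 (memAu_coord n₀) memAu_one x hx
    rw [mul_one] at h1
    have h2 : Φ.toFun (coord n₀) x = (T x) n₀ := hΦ x hx n₀
    rw [h2] at h1
    have h3 : (T x) n₀ * 1 = (T x) n₀ * Φ.toFun 1 x := by rw [mul_one]; exact h1
    exact (mul_left_cancel₀ hn₀ h3).symm
  set q : ℂ → ℂ := fun w => f (w • p) with hqdef
  have hmapsq : Set.MapsTo (fun w : ℂ => w • p) (Metric.ball (0:ℂ) 1) oB := by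
    intro w hw
    rw [mem_ball_zero_iff] at hw
    rw [mem_oB, norm_smul, hpn, mul_one]
    exact hw
  have hqdiff : DifferentiableOn ℂ q (Metric.ball (0:ℂ) 1) :=
    hf.1.comp ((differentiable_id.smul_const p).differentiableOn) hmapsq
  have hquc : UniformContinuousOn q (Metric.ball (0:ℂ) 1) := by
    rw [Metric.uniformContinuousOn_iff]
    intro ε' hε'
    obtain ⟨δ', hδ'0, Hδ'⟩ := Metric.uniformContinuousOn_iff.mp hf.2 ε' hε'
    refine ⟨δ', hδ'0, fun a ha b hb hab => ?_⟩
    apply Hδ' _ (hmapsq ha) _ (hmapsq hb)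
    rw [dist_eq_norm, ← sub_smul, norm_smul, hpn, mul_one, ← dist_eq_norm]
    exact hab
  have hlamball : lam ∈ Metric.ball (0:ℂ) 1 := by
    rw [mem_ball_zero_iff, hlamnorm]; exact hxn1
  set s : ℂ → ℂ := dslope q lam with hsdef
  have hsdiff : DifferentiableOn ℂ s (Metric.ball (0:ℂ) 1) :=
    (Complex.differentiableOn_dslope (isOpen_ball.mem_nhds hlamball)).mpr hqdiff
  have hsuc : UniformContinuousOn s (Metric.ball (0:ℂ) 1) := uc_dslope hlamball hqdiff hquc
  have hsu : MemAu (fun z => s (u z)) := memAu_comp_inner hpn hsdiff hsuc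
  set c₀ : ℂ := f (T x) with hc₀def
  have hqlam : q lam = c₀ := by
    rw [hqdef]
    simp only []
    rw [hlamp]
  set w₁ : ℓ2 → ℂ := u - (fun _ => lam) with hw₁def
  set w₂ : ℓ2 → ℂ := fun z => s (u z) with hw₂def
  have hw₁mem : MemAu w₁ := humem.sub (memAu_const lam)
  have hw₂mem : MemAu w₂ := hsu
  have hprodmem : MemAu (w₁ * w₂) := hw₁mem.mul hw₂mem
  have hconstmem : MemAu (fun _ : ℓ2 => c₀) := memAu_const c₀
  set hrem : ℓ2 → ℂ := (f - fun _ => c₀) - w₁ * w₂ with hremdef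
  have hremmem : MemAu hrem := (hf.sub hconstmem).sub hprodmem
  have hdecomp : f = (fun _ => c₀) + w₁ * w₂ + hrem := by
    funext z
    simp only [hremdef, Pi.add_apply, Pi.sub_apply, Pi.mul_apply]
    ring
  have hpsif : Φ.toFun f x = c₀ + Φ.toFun hrem x := by
    have e1 : Φ.toFun f x = Φ.toFun ((fun _ => c₀) + w₁ * w₂ + hrem) x := by rw [← hdecomp]
    rw [e1, psi_add Φ hx (hconstmem.add hprodmem) hremmem,
        psi_add Φ hx hconstmem hprodmem]
    have e2 : Φ.toFun (fun _ => c₀) x = c₀ := by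
      rw [psi_const Φ hx c₀, hone, mul_one]
    have e3 : Φ.toFun (w₁ * w₂) x = 0 := by
      rw [Φ.map_mul _ _ hw₁mem hw₂mem x hx]
      have e4 : Φ.toFun w₁ x = 0 := by
        rw [hw₁def, psi_sub Φ hx humem (memAu_const lam), hpsiu,
          psi_const Φ hx lam, hone, mul_one, sub_self]
      rw [e4, zero_mul]
    rw [e2, e3, add_zero]
  have hremz : ∀ z, hrem z = f z - q (u z) := by
    intro z
    have hds := sub_smul_dslope q lam (u z)
    rw [smul_eq_mul] at hds
    have : hrem z = f z - c₀ - (u z - lam) * s (u z) := by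
      simp only [hremdef, Pi.sub_apply, Pi.mul_apply, hw₁def, hw₂def]
    rw [this, hsdef, hds, hqlam]
    ring
  have hsup : supNorm (hrem * u^k) ≤ ε₁ + 2*M*(1-η)^k := by
    apply supNorm_le
    intro z hz
    have hzn : ‖z‖ < 1 := mem_oB.mp hz
    have huz1 : ‖u z‖ < 1 := by
      have := inner_mem_ball hpn hz
      rw [mem_ball_zero_iff] at this
      exact this
    have huzp : (u z) • p ∈ oB := by
      rw [mem_oB, norm_smul, hpn, mul_one]; exact huz1
    have hq_uz : q (u z) = f ((u z) • p) := by rw [hqdef]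
    have happ : (hrem * u^k) z = hrem z * (u z)^k := by
      simp [Pi.mul_apply, Pi.pow_apply]
    rw [happ, norm_mul, norm_pow]
    by_cases hcase : ‖u z‖ ≤ 1 - η
    · have hb1 : ‖hrem z‖ ≤ 2*M := by
        rw [hremz z, hq_uz]
        calc ‖f z - f ((u z) • p)‖ ≤ ‖f z‖ + ‖f ((u z) • p)‖ := norm_sub_le _ _
        _ ≤ 2*M := by
            have g1 := hM z hz
            have g2 := hM _ huzp
            linarith
      have hb2 : ‖u z‖^k ≤ (1-η)^k := pow_le_pow_left₀ (norm_nonneg _) hcase k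
      calc ‖hrem z‖ * ‖u z‖^k ≤ (2*M) * (1-η)^k := by
            apply mul_le_mul hb1 hb2 (by positivity) (by linarith)
      _ ≤ ε₁ + 2*M*(1-η)^k := by linarith
    · push_neg at hcase
      have hdistz : dist z ((u z) • p) < δ := by
        have hpr := norm_sub_proj_sq hpn z
        have h5 : (1-η)^2 ≤ ‖u z‖^2 := pow_le_pow_left₀ h1η0 hcase.le 2
        have hsq : ‖z - (u z) • p‖^2 ≤ δ^2/2 := by
          rw [hudef]
          rw [hpr]
          nlinarith [norm_nonneg z]
        rw [dist_eq_norm]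
        nlinarith [norm_nonneg (z - (u z) • p)]
      have hb1 : ‖hrem z‖ ≤ ε₁ := by
        rw [hremz z, hq_uz, ← dist_eq_norm]
        exact (Hδ z hz _ huzp hdistz).le
      have hb2 : ‖u z‖^k ≤ 1 := pow_le_one₀ (norm_nonneg _) huz1.le
      calc ‖hrem z‖ * ‖u z‖^k ≤ ε₁ * 1 := mul_le_mul hb1 hb2 (by positivity) hε₁.le
      _ = ε₁ := mul_one _
      _ ≤ ε₁ + 2*M*(1-η)^k := by nlinarith [pow_nonneg h1η0 k]
  have hpsiuk : Φ.toFun (u^k) x = lam ^ k := by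
    rw [psi_pow Φ hx hone humem k, hpsiu]
  have hcomb : ‖Φ.toFun hrem x‖ * ‖x‖^k ≤ C * (ε₁ + 2*M*(1-η)^k) := by
    have h6 := hCb _ (hremmem.mul (humem.pow k)) x hx
    rw [Φ.map_mul _ _ hremmem (humem.pow k) x hx, hpsiuk, norm_mul, norm_pow,
      hlamnorm] at h6
    exact h6.trans (mul_le_mul_of_nonneg_left hsup hC0.le)
  have hxk : (1:ℝ)/2 ≤ ‖x‖^k :=
    hρpow.trans (pow_le_pow_left₀ (lt_of_lt_of_le one_half_pos hρhalf).le hρx.le k)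
  have hpsih : ‖Φ.toFun hrem x‖ ≤ 2 * (C * (ε₁ + 2*M*(1-η)^k)) := by
    nlinarith [norm_nonneg (Φ.toFun hrem x)]
  have e7 : Φ.toFun f x - f (T x) = Φ.toFun hrem x := by
    rw [hpsif, hc₀def]; ring
  rw [e7]
  have h9 : (1-η)^k * (2*M+1) < ε₁ := (lt_div_iff₀ (by positivity)).mp hkpow
  have h8 : 2*M*(1-η)^k ≤ ε₁ := by nlinarith [pow_nonneg h1η0 k]
  calc ‖Φ.toFun hrem x‖ ≤ 2 * (C * (ε₁ + 2*M*(1-η)^k)) := hpsih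
  _ ≤ 2 * (C * (ε₁ + ε₁)) := by
      apply mul_le_mul_of_nonneg_left _ (by norm_num)
      apply mul_le_mul_of_nonneg_left _ hC0.le
      linarith
  _ = 4 * C * ε₁ := by ring
  _ = ε / 2 := by rw [hε₁def]; field_simp; ring
  _ ≤ ε := by linarith

end S5


/-- the fiber over (the restriction to the ball of) a linear isometry
`T : ℓ2 → ℓ2` consists only of the composition homomorphism: `Φ(f)(x) = f̃(Tx)`. -/
theorem stmt5 (T : ℓ2 →ₗᵢ[ℂ] ℓ2) (Φ : MuInfHom) (hΦ : xiEq Φ (fun x => T x)) :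
    ∀ f fext, MemAu f → IsExt f fext → ∀ x ∈ oB, Φ.toFun f x = fext (T x) := by
  classical
  intro f fext hf hext x hx
  have hTxB : T x ∈ oB := by rw [S5.mem_oB, T.norm_map]; exact S5.mem_oB.mp hx
  have hfext : fext (T x) = f (T x) := hext.2 hTxB
  rw [hfext]
  have key : ∀ ε : ℝ, 0 < ε → ‖Φ.toFun f x - f (T x)‖ ≤ ε := by
    intro ε hε
    obtain ⟨ρ, hρ0, hρ1, Hρ⟩ := S5.shell T Φ hΦ hf hε
    set e : ℓ2 := if x = 0 then lp.single 2 0 (1:ℂ) else (((‖x‖:ℝ):ℂ))⁻¹ • x with hedef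
    have hen : ‖e‖ = 1 := by
      rw [hedef]
      split_ifs with hx0
      · have h := lp.norm_single (p := (2 : ENNReal)) (E := fun _ : ℕ => ℂ)
          (show (0 : ENNReal) < 2 by norm_num) 0 (1:ℂ)
        simpa using h
      · have hxpos : (0:ℝ) < ‖x‖ := norm_pos_iff.mpr hx0
        rw [norm_smul, norm_inv]
        simp only [Complex.norm_real, Real.norm_eq_abs, abs_of_nonneg (norm_nonneg x)]
        field_simp
    have hxe : ((‖x‖:ℝ):ℂ) • e = x := by
      rw [hedef]; split_ifs with hx0
      · rw [hx0]; simp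
      · rw [smul_smul, mul_inv_cancel₀, one_smul]
        exact Complex.ofReal_ne_zero.mpr (norm_pos_iff.mpr hx0).ne'
    have hFd : DifferentiableOn ℂ (Φ.toFun f) oB := (Φ.maps_mem f hf).1
    have hTmaps : Set.MapsTo (fun z : ℓ2 => T z) oB oB := by
      intro z hz; rw [S5.mem_oB, T.norm_map]; exact S5.mem_oB.mp hz
    have hGd : DifferentiableOn ℂ (fun z : ℓ2 => f (T z)) oB := by
      have hTd : DifferentiableOn ℂ (fun z : ℓ2 => T z) oB :=
        (T.toContinuousLinearMap.differentiable.differentiableOn).congr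
          (fun z _ => by rw [LinearIsometry.coe_toContinuousLinearMap])
      exact hf.1.comp hTd hTmaps
    have hse : Set.MapsTo (fun w : ℂ => w • e) (Metric.ball (0:ℂ) 1) oB := by
      intro w hw
      rw [S5.mem_oB, norm_smul, hen, mul_one]
      exact mem_ball_zero_iff.mp hw
    have hdd : DifferentiableOn ℂ
        (fun w : ℂ => Φ.toFun f (w • e) - f (T (w • e))) (Metric.ball (0:ℂ) 1) := by
      apply DifferentiableOn.sub
      · exact hFd.comp ((differentiable_id.smul_const e).differentiableOn) hse
      · exact hGd.comp ((differentiable_id.smul_const e).differentiableOn) hse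
    set r : ℝ := max ((ρ+1)/2) ((‖x‖+1)/2) with hrdef
    have hρr : ρ < r := lt_of_lt_of_le (show ρ < (ρ+1)/2 by linarith) (le_max_left _ _)
    have hr1 : r < 1 := by
      have hxn : ‖x‖ < 1 := S5.mem_oB.mp hx
      apply max_lt <;> [linarith; linarith]
    have hr0 : (0:ℝ) < r := lt_trans hρ0 hρr
    have hxr : ‖x‖ ≤ r := le_trans (show ‖x‖ ≤ (‖x‖+1)/2 by linarith [S5.mem_oB.mp hx]) (le_max_right _ _)
    have hmax : ∀ w ∈ closure (Metric.ball (0:ℂ) r),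
        ‖Φ.toFun f (w • e) - f (T (w • e))‖ ≤ ε := by
      intro w hw
      apply Complex.norm_le_of_forall_mem_frontier_norm_le Metric.isBounded_ball _ _ hw
      · refine ⟨hdd.mono (Metric.ball_subset_ball hr1.le), ?_⟩
        have hcl : closure (Metric.ball (0:ℂ) r) ⊆ Metric.ball (0:ℂ) 1 := by
          rw [closure_ball (0:ℂ) hr0.ne']
          exact Metric.closedBall_subset_ball hr1
        exact (hdd.continuousOn).mono hcl
      · intro w' hw'
        rw [frontier_ball (0:ℂ) hr0.ne'] at hw'
        have hwn : ‖w'‖ = r := by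
          rwa [mem_sphere_zero_iff_norm] at hw'
        have h1 : w' • e ∈ oB := by
          rw [S5.mem_oB, norm_smul, hen, mul_one, hwn]; exact hr1
        have h2 : ρ < ‖w' • e‖ := by
          rw [norm_smul, hen, mul_one, hwn]; exact hρr
        exact Hρ _ h1 h2
    have hxcl : ((‖x‖:ℝ):ℂ) ∈ closure (Metric.ball (0:ℂ) r) := by
      rw [closure_ball (0:ℂ) hr0.ne', Metric.mem_closedBall, dist_zero_right]
      simpa using hxr
    have hfin := hmax _ hxcl
    rw [hxe] at hfin
    exact hfin
  by_contra hne
  have hpos : 0 < ‖Φ.toFun f x - f (T x)‖ := by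
    rw [norm_pos_iff, sub_ne_zero]; exact hne
  have := key (‖Φ.toFun f x - f (T x)‖ / 2) (by linarith)
  linarith
end
end

section
/- Let g ∈ ℋ^∞(B_{ℓ₂},ℓ₂) be given by g(x) = ⟨x,e₁⟩e₁. Then ‖g‖ = 1, g(B_{ℓ₂}) ⊆ B_{ℓ₂}, and there exists an injective map Ψ from the open unit ball of ℋ^∞(B_{ℓ₂},ℓ₂) into the fiber 𝓕(g) which is analytic, meaning that for every f ∈ 𝒜_u(B_{ℓ₂}) and x ∈ B_{ℓ₂} the map h ↦ Ψ(h)(f)(x) is holomorphic on the open unit ball of ℋ^∞(B_{ℓ₂},ℓ₂). -/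
open Metric Set Filter

noncomputable section

/-- A fixed nonprincipal-ish ultrafilter extending `atTop` on `ℕ`. -/
def UF : Ultrafilter ℕ := Ultrafilter.of Filter.atTop

lemma UF_le : (UF : Filter ℕ) ≤ Filter.atTop := Ultrafilter.of_le _

lemma ulim_tendsto {a : ℕ → ℂ} {C : ℝ} (h : ∀ n, ‖a n‖ ≤ C) :
    Filter.Tendsto a (UF : Filter ℕ) (nhds (limUnder (UF : Filter ℕ) a)) := by
  have hmem : Filter.map a (UF : Filter ℕ) ≤ Filter.principal (Metric.closedBall (0:ℂ) C) := by
    refine Filter.le_principal_iff.2 ?_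
    refine Filter.mem_map.2 ?_
    have : ∀ n, a n ∈ Metric.closedBall (0:ℂ) C := fun n => by
      simpa [Metric.mem_closedBall, dist_eq_norm] using h n
    filter_upwards [] with n using this n
  obtain ⟨x, _, hx⟩ := (isCompact_closedBall (0:ℂ) C).ultrafilter_le_nhds
    (Ultrafilter.map a UF) (by simpa using hmem)
  have ht : Filter.Tendsto a (UF : Filter ℕ) (nhds x) := hx
  rwa [ht.limUnder_eq]

/-- One-variable quantitative estimates. -/
lemma oneD {φ : ℂ → ℂ} {R M : ℝ} (hR : 0 < R)
    (hd : DifferentiableOn ℂ φ (Metric.ball 0 R))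
    (hb : ∀ z ∈ Metric.ball (0:ℂ) R, ‖φ z‖ ≤ M) :
    (∀ z ∈ Metric.ball (0:ℂ) R, ‖dslope φ 0 z‖ ≤ 2*M/R) ∧
    (∀ z ∈ Metric.ball (0:ℂ) R, ‖φ z - φ 0 - (deriv φ 0) * z‖ ≤ 4*M/R^2 * ‖z‖^2) := by
  have h0 : (0:ℂ) ∈ Metric.ball (0:ℂ) R := by simpa using hR
  have hM0 : 0 ≤ M := (norm_nonneg _).trans (hb 0 h0)
  -- first dslope bound
  have key : ∀ (ψ : ℂ → ℂ) (M' : ℝ), 0 ≤ M' → DifferentiableOn ℂ ψ (Metric.ball 0 R) →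
      (∀ z ∈ Metric.ball (0:ℂ) R, ‖ψ z‖ ≤ M') →
      ∀ z ∈ Metric.ball (0:ℂ) R, ‖dslope ψ 0 z‖ ≤ 2*M'/R := by
    intro ψ M' hM' hdψ hbψ z hz
    refine le_of_forall_gt_imp_ge_of_dense ?_
    intro c hc
    have hε : 0 < c * R - 2 * M' := by
      have : 2*M'/R < c := hc
      nlinarith [(div_lt_iff₀ hR).1 this]
    have hmaps : Set.MapsTo ψ (Metric.ball 0 R) (Metric.ball (ψ 0) (2*M' + (c*R - 2*M'))) := by
      intro w hw
      have h1 : ‖ψ w - ψ 0‖ ≤ 2*M' := by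
        calc ‖ψ w - ψ 0‖ ≤ ‖ψ w‖ + ‖ψ 0‖ := norm_sub_le _ _
        _ ≤ M' + M' := add_le_add (hbψ w hw) (hbψ 0 h0)
        _ = 2*M' := by ring
      have : ‖ψ w - ψ 0‖ < 2*M' + (c*R - 2*M') := by linarith
      simpa [Metric.mem_ball, dist_eq_norm] using this
    have := Complex.norm_dslope_le_div_of_mapsTo_ball hdψ (hmaps.mono_right Metric.ball_subset_closedBall) hz
    calc ‖dslope ψ 0 z‖ ≤ (2*M' + (c*R - 2*M'))/R := this
    _ = c := by field_simp; ring
  have hd1 : DifferentiableOn ℂ (dslope φ 0) (Metric.ball 0 R) :=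
    (Complex.differentiableOn_dslope (Metric.ball_mem_nhds _ hR)).2 hd
  have hb1 : ∀ z ∈ Metric.ball (0:ℂ) R, ‖dslope φ 0 z‖ ≤ 2*M/R := key φ M hM0 hd hb
  have hb2 : ∀ z ∈ Metric.ball (0:ℂ) R, ‖dslope (dslope φ 0) 0 z‖ ≤ 2*(2*M/R)/R :=
    key (dslope φ 0) (2*M/R) (by positivity) hd1 hb1
  refine ⟨hb1, ?_⟩
  intro z hz
  rcases eq_or_ne z 0 with rfl | hz0
  · simp
  · have hψ : φ z - φ 0 - (deriv φ 0) * z = (dslope (dslope φ 0) 0 z) * z^2 := by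
      have h1 : dslope φ 0 z = (φ z - φ 0) / (z - 0) := by
        rw [dslope_of_ne _ hz0, slope_def_field]
      have h0' : dslope φ 0 0 = deriv φ 0 := dslope_same _ _
      have h2 : dslope (dslope φ 0) 0 z = ((φ z - φ 0)/(z-0) - deriv φ 0) / (z - 0) := by
        rw [dslope_of_ne _ hz0, slope_def_field, h1, h0']
      rw [h2]
      field_simp
      ring
    rw [hψ]
    rw [norm_mul]
    have : ‖z^2‖ = ‖z‖^2 := by simp [norm_pow]
    rw [this]
    have h3 : 2*(2*M/R)/R = 4*M/R^2 := by field_simp; ring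
    have := hb2 z hz
    rw [h3] at this
    exact mul_le_mul_of_nonneg_right this (by positivity)

set_option maxHeartbeats 1000000 in
/-- Pointwise ultrafilter limit of a uniformly bounded sequence of holomorphic
functions is holomorphic (Vitali-type theorem). -/
lemma ulim_diffOn {E : Type*} [NormedAddCommGroup E] [NormedSpace ℂ E] {Ω : Set E}
    (hΩ : IsOpen Ω) (F : ℕ → E → ℂ) {M : ℝ}
    (hd : ∀ n, DifferentiableOn ℂ (F n) Ω) (hb : ∀ n, ∀ x ∈ Ω, ‖F n x‖ ≤ M) :
    DifferentiableOn ℂ (fun x => limUnder (UF : Filter ℕ) fun n => F n x) Ω := by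
  intro x₀ hx₀
  obtain ⟨ρ2, hρ2, hballs⟩ := Metric.isOpen_iff.1 hΩ x₀ hx₀
  set ρ : ℝ := ρ2 / 2 with hρdef
  have hρ : 0 < ρ := by positivity
  have hball : Metric.ball x₀ (2*ρ) ⊆ Ω := by
    have h22 : 2*ρ = ρ2 := by rw [hρdef]; ring
    rw [h22]; exact hballs
  have hM0 : 0 ≤ M := (norm_nonneg _).trans (hb 0 x₀ hx₀)
  set G : E → ℂ := fun x => limUnder (UF : Filter ℕ) fun n => F n x with hGdef
  have hFd : ∀ n, ∀ x ∈ Metric.ball x₀ (2*ρ), DifferentiableAt ℂ (F n) x := by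
    intro n x hx
    exact (hd n).differentiableAt (hΩ.mem_nhds (hball hx))
  have hφ : ∀ (n : ℕ) (v : E), ‖v‖ ≤ 1 →
      (DifferentiableOn ℂ (fun z : ℂ => F n (x₀ + z • v)) (Metric.ball 0 (2*ρ)) ∧
        ∀ z ∈ Metric.ball (0:ℂ) (2*ρ), ‖F n (x₀ + z • v)‖ ≤ M) := by
    intro n v hv
    have hmem : ∀ z ∈ Metric.ball (0:ℂ) (2*ρ), x₀ + z • v ∈ Metric.ball x₀ (2*ρ) := by
      intro z hz
      rw [Metric.mem_ball, dist_eq_norm]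
      simp only [add_sub_cancel_left]
      rw [norm_smul]
      calc ‖z‖ * ‖v‖ ≤ ‖z‖ * 1 := mul_le_mul_of_nonneg_left hv (norm_nonneg _)
      _ = ‖z‖ := mul_one _
      _ < 2*ρ := by simpa [Metric.mem_ball, dist_eq_norm] using hz
    constructor
    · intro z hz
      have h1 : DifferentiableAt ℂ (fun z : ℂ => x₀ + z • v) z :=
        (differentiableAt_id.smul_const v).const_add x₀
      exact ((hFd n _ (hmem z hz)).comp z h1).differentiableWithinAt
    · intro z hz
      exact hb n _ (hball (hmem z hz))
  have hderiv : ∀ (n : ℕ) (v : E),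
      deriv (fun z : ℂ => F n (x₀ + z • v)) 0 = (fderiv ℂ (F n) x₀) v := by
    intro n v
    have h1 : HasDerivAt (fun z : ℂ => x₀ + z • v) v 0 := by
      simpa using ((hasDerivAt_id (0:ℂ)).smul_const v).const_add x₀
    have h2 : HasFDerivAt (F n) (fderiv ℂ (F n) x₀) x₀ :=
      (hFd n x₀ (by simpa [Metric.mem_ball] using (by positivity : (0:ℝ) < 2*ρ))).hasFDerivAt
    have h2' : HasFDerivAt (F n) (fderiv ℂ (F n) x₀) (x₀ + (0:ℂ) • v) := by
      simpa using h2
    have h3 : HasDerivAt (fun z : ℂ => F n (x₀ + z • v)) ((fderiv ℂ (F n) x₀) v) 0 := by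
      have h4 := h2'.comp_hasDerivAt (x := (0:ℂ)) h1
      exact h4
    exact h3.deriv
  have hDbd : ∀ (n : ℕ) (v : E), ‖v‖ ≤ 1 → ‖(fderiv ℂ (F n) x₀) v‖ ≤ 2*M/(2*ρ) := by
    intro n v hv
    have h := (oneD (by positivity) (hφ n v hv).1 (hφ n v hv).2).1 0
      (by simpa [Metric.mem_ball] using (by positivity : (0:ℝ) < 2*ρ))
    rw [dslope_same, hderiv n v] at h
    exact h
  have hMdiv : 2*M/(2*ρ) = M/ρ := by field_simp
  have hDbd' : ∀ (n : ℕ) (v : E), ‖(fderiv ℂ (F n) x₀) v‖ ≤ (M/ρ) * ‖v‖ := by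
    intro n v
    rcases eq_or_ne v 0 with rfl | hv0
    · simp
    · have hnv : 0 < ‖v‖ := norm_pos_iff.2 hv0
      have hscale : (fderiv ℂ (F n) x₀) v = ((‖v‖:ℝ) : ℂ) • (fderiv ℂ (F n) x₀) (((‖v‖⁻¹:ℝ) : ℂ) • v) := by
        rw [← ContinuousLinearMap.map_smul, smul_smul]
        norm_cast
        rw [mul_inv_cancel₀ hnv.ne', one_smul]
      have hu : ‖(((‖v‖⁻¹:ℝ)) : ℂ) • v‖ ≤ 1 := by
        rw [norm_smul]
        simp only [Complex.norm_real, Real.norm_eq_abs]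
        rw [abs_of_nonneg (by positivity), inv_mul_cancel₀ hnv.ne']
      rw [hscale, norm_smul]
      have h1 : ‖((‖v‖:ℝ):ℂ)‖ = ‖v‖ := by
        simp [Complex.norm_real, abs_of_nonneg (norm_nonneg v)]
      rw [h1]
      have h2 := hDbd n _ hu
      rw [hMdiv] at h2
      calc ‖v‖ * ‖(fderiv ℂ (F n) x₀) (((‖v‖⁻¹:ℝ):ℂ) • v)‖ ≤ ‖v‖ * (M/ρ) :=
            mul_le_mul_of_nonneg_left h2 (norm_nonneg v)
      _ = (M/ρ) * ‖v‖ := mul_comm _ _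
  -- the limit functional
  set ℓf : E → ℂ := fun v => limUnder (UF : Filter ℕ) (fun n => (fderiv ℂ (F n) x₀) v) with hℓdef
  have hℓlim : ∀ v, Filter.Tendsto (fun n => (fderiv ℂ (F n) x₀) v) (UF : Filter ℕ) (nhds (ℓf v)) :=
    fun v => ulim_tendsto (fun n => hDbd' n v)
  have hℓadd : ∀ v w, ℓf (v + w) = ℓf v + ℓf w := by
    intro v w
    have h1 : Filter.Tendsto (fun n => (fderiv ℂ (F n) x₀) (v + w)) (UF : Filter ℕ)
        (nhds (ℓf v + ℓf w)) := by
      have := (hℓlim v).add (hℓlim w)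
      simpa [← map_add] using this
    exact h1.limUnder_eq
  have hℓsmul : ∀ (c : ℂ) v, ℓf (c • v) = c • ℓf v := by
    intro c v
    have h1 : Filter.Tendsto (fun n => (fderiv ℂ (F n) x₀) (c • v)) (UF : Filter ℕ)
        (nhds (c • ℓf v)) := by
      have := (hℓlim v).const_smul c
      simpa [← map_smul] using this
    exact h1.limUnder_eq
  set Llin : E →ₗ[ℂ] ℂ := { toFun := ℓf, map_add' := hℓadd, map_smul' := hℓsmul } with hLlin
  have hℓbd : ∀ v, ‖ℓf v‖ ≤ (M/ρ) * ‖v‖ := by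
    intro v
    exact le_of_tendsto (hℓlim v).norm (Filter.Eventually.of_forall (fun n => hDbd' n v))
  set L : E →L[ℂ] ℂ := LinearMap.mkContinuous Llin (M/ρ) hℓbd with hLdef
  have hGlim : ∀ x ∈ Ω, Filter.Tendsto (fun n => F n x) (UF : Filter ℕ) (nhds (G x)) :=
    fun x hx => ulim_tendsto (fun n => hb n x hx)
  set C : ℝ := 4*M/(2*ρ)^2 with hCdef
  have hC0 : 0 ≤ C := by positivity
  have hkey : ∀ w : E, ‖w‖ < ρ → ‖G (x₀ + w) - G x₀ - ℓf w‖ ≤ C * ‖w‖^2 := by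
    intro w hw
    have hx₀w : x₀ + w ∈ Ω := by
      apply hball
      rw [Metric.mem_ball, dist_eq_norm, add_sub_cancel_left]
      linarith
    rcases eq_or_ne w 0 with rfl | hw0
    · have hℓ0 : ℓf 0 = 0 := by
        have : Filter.Tendsto (fun n => (fderiv ℂ (F n) x₀) (0:E)) (UF : Filter ℕ) (nhds 0) := by
          simpa using (tendsto_const_nhds : Filter.Tendsto (fun _ : ℕ => (0:ℂ)) _ _)
        exact this.limUnder_eq
      simp [hℓ0]
    · have hnw : 0 < ‖w‖ := norm_pos_iff.2 hw0
      set u : E := (((‖w‖⁻¹:ℝ)) : ℂ) • w with hudef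
      have hu : ‖u‖ ≤ 1 := by
        rw [hudef, norm_smul]
        simp only [Complex.norm_real, Real.norm_eq_abs]
        rw [abs_of_nonneg (by positivity), inv_mul_cancel₀ hnw.ne']
      set z : ℂ := ((‖w‖:ℝ) : ℂ) with hzdef
      have hzu : z • u = w := by
        rw [hzdef, hudef, smul_smul]
        norm_cast
        rw [mul_inv_cancel₀ hnw.ne', one_smul]
      have hznorm : ‖z‖ = ‖w‖ := by
        rw [hzdef]; simp [Complex.norm_real, abs_of_nonneg (norm_nonneg w)]
      have hzball : z ∈ Metric.ball (0:ℂ) (2*ρ) := by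
        rw [Metric.mem_ball, dist_zero_right, hznorm]; linarith
      have hterm : ∀ n, ‖F n (x₀ + w) - F n x₀ - (fderiv ℂ (F n) x₀) w‖ ≤ C * ‖w‖^2 := by
        intro n
        have h := (oneD (by positivity) (hφ n u hu).1 (hφ n u hu).2).2 z hzball
        rw [hderiv n u] at h
        have he1 : x₀ + z • u = x₀ + w := by rw [hzu]
        have he2 : x₀ + (0:ℂ) • u = x₀ := by simp
        have hc0 : ((‖w‖:ℝ):ℂ) ≠ 0 := Complex.ofReal_ne_zero.2 hnw.ne'
        have he3 : (fderiv ℂ (F n) x₀) u * z = (fderiv ℂ (F n) x₀) w := by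
          rw [hudef, map_smul, smul_eq_mul, hzdef]
          push_cast
          field_simp
        rw [he1, he2, he3, hznorm] at h
        exact h
      have hlim2 : Filter.Tendsto
          (fun n => F n (x₀ + w) - F n x₀ - (fderiv ℂ (F n) x₀) w) (UF : Filter ℕ)
          (nhds (G (x₀ + w) - G x₀ - ℓf w)) :=
        ((hGlim _ hx₀w).sub (hGlim _ hx₀)).sub (hℓlim w)
      exact le_of_tendsto hlim2.norm (Filter.Eventually.of_forall hterm)
  have hF : HasFDerivAt G L x₀ := by
    rw [hasFDerivAt_iff_isLittleO_nhds_zero, Asymptotics.isLittleO_iff]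
    intro c hc
    have hδ : 0 < min ρ (c / (C + 1)) := by
      apply lt_min hρ; positivity
    have hev : ∀ᶠ w in nhds (0:E), ‖w‖ < min ρ (c / (C + 1)) := by
      filter_upwards [Metric.ball_mem_nhds (0:E) hδ] with w hw
      simpa [Metric.mem_ball, dist_zero_right] using hw
    filter_upwards [hev] with w hw
    have hw1 : ‖w‖ < ρ := lt_of_lt_of_le hw (min_le_left _ _)
    have hw2 : ‖w‖ ≤ c / (C + 1) := le_of_lt (lt_of_lt_of_le hw (min_le_right _ _))
    have hLw : L w = ℓf w := rfl
    calc ‖G (x₀ + w) - G x₀ - L w‖ ≤ C * ‖w‖^2 := by rw [hLw]; exact hkey w hw1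
    _ = (C * ‖w‖) * ‖w‖ := by ring
    _ ≤ c * ‖w‖ := by
        apply mul_le_mul_of_nonneg_right _ (norm_nonneg w)
        calc C * ‖w‖ ≤ C * (c / (C+1)) := mul_le_mul_of_nonneg_left hw2 hC0
        _ ≤ c := by
            have he : C * (c / (C + 1)) = (C * c) / (C + 1) := by ring
            rw [he, div_le_iff₀ (by positivity : (0:ℝ) < C + 1)]
            nlinarith
  exact hF.differentiableAt.differentiableWithinAt

/-- Coordinate evaluation as a continuous linear map. -/
def coordCLM (j : ℕ) : ℓ2 →L[ℂ] ℂ :=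
  LinearMap.mkContinuous
    { toFun := fun y => y j
      map_add' := fun y z => by simp [lp.coeFn_add]
      map_smul' := fun c y => by simp [lp.coeFn_smul] }
    1 (fun y => by
      rw [one_mul]; exact lp.norm_apply_le_norm (by norm_num : (2:ENNReal) ≠ 0) y j)

@[simp] lemma coordCLM_apply (j : ℕ) (y : ℓ2) : coordCLM j y = y j := rfl

lemma h2toReal : (2:ENNReal).toReal = 2 := by norm_num

lemma sum_single_apply (s : Finset ℕ) (f : ℕ → ℂ) (j : ℕ) :
    (∑ i ∈ s, lp.single 2 i (f i) : ℓ2) j = if j ∈ s then f j else 0 := by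
  rw [lp.coeFn_sum, Finset.sum_apply]
  simp [lp.single_apply, Finset.sum_dite_eq, eq_comm]

lemma norm_sum_single_sq (s : Finset ℕ) (f : ℕ → ℂ) :
    ‖(∑ i ∈ s, lp.single 2 i (f i) : ℓ2)‖ ^ 2 = ∑ i ∈ s, ‖f i‖ ^ 2 := by
  have h := lp.norm_sum_single (p := 2) (by rw [h2toReal]; norm_num) f s
  rw [h2toReal] at h
  have h1 : ∀ a : ℝ, 0 ≤ a → a ^ (2:ℝ) = a ^ 2 := fun a ha => by
    rw [show (2:ℝ) = ((2:ℕ):ℝ) by norm_num, Real.rpow_natCast]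
  rw [h1 _ (norm_nonneg _)] at h
  rw [h]
  exact Finset.sum_congr rfl fun i _ => h1 _ (norm_nonneg _)

lemma coord_sq_le (y : ℓ2) (s : Finset ℕ) : ∑ j ∈ s, ‖y j‖ ^ 2 ≤ ‖y‖ ^ 2 := by
  have h := lp.sum_rpow_le_norm_rpow (p := 2) (by rw [h2toReal]; norm_num) y s
  rw [h2toReal] at h
  have h1 : ∀ a : ℝ, 0 ≤ a → a ^ (2:ℝ) = a ^ 2 := fun a ha => by
    rw [show (2:ℝ) = ((2:ℕ):ℝ) by norm_num, Real.rpow_natCast]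
  rw [h1 _ (norm_nonneg _)] at h
  calc ∑ j ∈ s, ‖y j‖ ^ 2 = ∑ j ∈ s, ‖y j‖ ^ (2:ℝ) :=
        Finset.sum_congr rfl fun i _ => (h1 _ (norm_nonneg _)).symm
  _ ≤ ‖y‖ ^ 2 := h

/-- Position encoding. -/
def enc (n c : ℕ) : ℕ := 2 + Nat.pair n c

lemma enc_inj {n c n' c' : ℕ} (h : enc n c = enc n' c') : n = n' ∧ c = c' := by
  have h1 : Nat.pair n c = Nat.pair n' c' := by unfold enc at h; omega
  have h2 := congrArg Nat.unpair h1
  rw [Nat.unpair_pair, Nat.unpair_pair] at h2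
  exact ⟨congrArg Prod.fst h2, congrArg Prod.snd h2⟩

lemma enc_ne_zero (n c : ℕ) : enc n c ≠ 0 := by unfold enc; omega

lemma le_enc (n c : ℕ) : n + 2 ≤ enc n c := by
  have := Nat.left_le_pair n c
  unfold enc; omega

lemma unpair_enc (n c : ℕ) : (Nat.unpair (enc n c - 2)).2 = c := by
  rw [enc]
  simp [Nat.unpair_pair]

lemma single_of_mul (i : ℕ) (c : ℂ) :
    c • (lp.single 2 i (1:ℂ) : ℓ2) = lp.single 2 i c := by
  rw [← lp.single_smul]
  congr 1
  simp

/-- The point used in the definition of the homomorphisms. -/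
def Qpt (x w : ℓ2) (n : ℕ) : ℓ2 :=
  lp.single 2 0 (x 0) + (x 1 / 2) • lp.single 2 (enc n 0) 1
    + ∑ k ∈ Finset.range (n+1), ((x 1 / 2) * w k) • lp.single 2 (enc n (k+1)) 1

def Qval (x w : ℓ2) (n : ℕ) (j : ℕ) : ℂ :=
  if j = 0 then x 0 else if j = enc n 0 then x 1 / 2
    else (x 1 / 2) * w ((Nat.unpair (j - 2)).2 - 1)

def Qset (n : ℕ) : Finset ℕ :=
  insert 0 (insert (enc n 0) ((Finset.range (n+1)).image (fun k => enc n (k+1))))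

lemma Qval_zero (x w : ℓ2) (n : ℕ) : Qval x w n 0 = x 0 := by rw [Qval]; simp

lemma Qval_marker (x w : ℓ2) (n : ℕ) : Qval x w n (enc n 0) = x 1 / 2 := by
  rw [Qval, if_neg (enc_ne_zero n 0), if_pos rfl]

lemma Qval_coordk (x w : ℓ2) (n k : ℕ) : Qval x w n (enc n (k+1)) = (x 1 / 2) * w k := by
  rw [Qval, if_neg (enc_ne_zero n (k+1)),
    if_neg (fun h => Nat.succ_ne_zero k (enc_inj h).2), unpair_enc]
  simp

lemma notmem0 (n : ℕ) :
    (0:ℕ) ∉ insert (enc n 0) ((Finset.range (n+1)).image (fun k => enc n (k+1))) := by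
  intro hmem
  rcases Finset.mem_insert.1 hmem with h | h
  · have := le_enc n 0; omega
  · rcases Finset.mem_image.1 h with ⟨k, _, hk⟩
    have := le_enc n (k+1); omega

lemma notmem1 (n : ℕ) :
    enc n 0 ∉ (Finset.range (n+1)).image (fun k => enc n (k+1)) := by
  intro hmem
  rcases Finset.mem_image.1 hmem with ⟨k, _, hk⟩
  have := (enc_inj hk).2; omega

lemma encinj (n : ℕ) : ∀ a ∈ Finset.range (n+1), ∀ b ∈ Finset.range (n+1),
    enc n (a+1) = enc n (b+1) → a = b := by
  intro a _ b _ h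
  have := (enc_inj h).2; omega

lemma Q_eq_sum (x w : ℓ2) (n : ℕ) :
    Qpt x w n = ∑ j ∈ Qset n, lp.single 2 j (Qval x w n j) := by
  rw [Qset, Finset.sum_insert (notmem0 n), Finset.sum_insert (notmem1 n),
    Finset.sum_image (encinj n), Qval_zero, Qval_marker,
    show (∑ k ∈ Finset.range (n+1), lp.single 2 (enc n (k+1)) (Qval x w n (enc n (k+1))) : ℓ2)
        = ∑ k ∈ Finset.range (n+1), ((x 1/2) * w k) • lp.single 2 (enc n (k+1)) 1 from
      Finset.sum_congr rfl fun k _ => by rw [Qval_coordk, single_of_mul],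
    Qpt, add_assoc, single_of_mul]

lemma Q_coe (x w : ℓ2) (n j : ℕ) :
    Qpt x w n j = if j ∈ Qset n then Qval x w n j else 0 := by
  rw [Q_eq_sum, sum_single_apply]

lemma Q_apply_zero (x w : ℓ2) (n : ℕ) : Qpt x w n 0 = x 0 := by
  rw [Q_coe, if_pos (by simp [Qset]), Qval_zero]

lemma Q_apply_small (x w : ℓ2) (n m : ℕ) (hm : 1 ≤ m) (hn : m ≤ n) : Qpt x w n m = 0 := by
  rw [Q_coe, if_neg]
  intro hmem
  rcases Finset.mem_insert.1 hmem with h | hmem'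
  · omega
  rcases Finset.mem_insert.1 hmem' with h | h
  · have := le_enc n 0; omega
  · rcases Finset.mem_image.1 h with ⟨k, _, hk⟩
    have := le_enc n (k+1); omega

lemma Q_apply_marker (x w : ℓ2) (n : ℕ) : Qpt x w n (enc n 0) = x 1 / 2 := by
  rw [Q_coe, if_pos (by simp [Qset]), Qval_marker]

lemma Q_apply_enc_marker_ne (x w : ℓ2) (n j : ℕ) (hj : j ≠ n) : Qpt x w n (enc j 0) = 0 := by
  rw [Q_coe, if_neg]
  intro hmem
  rcases Finset.mem_insert.1 hmem with h | hmem'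
  · exact enc_ne_zero j 0 h
  rcases Finset.mem_insert.1 hmem' with h | h
  · exact hj (enc_inj h).1
  · rcases Finset.mem_image.1 h with ⟨k, _, hk⟩
    have := (enc_inj hk).2; omega

lemma Q_apply_coordk (x w : ℓ2) (n k : ℕ) (hk : k ≤ n) :
    Qpt x w n (enc n (k+1)) = (x 1 / 2) * w k := by
  rw [Q_coe, if_pos, Qval_coordk]
  simp only [Qset, Finset.mem_insert, Finset.mem_image, Finset.mem_range]
  right; right
  exact ⟨k, by omega, rfl⟩

lemma Q_apply_enc_coord_ne (x w : ℓ2) (n j m : ℕ) (hj : j = n → n < m) :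
    Qpt x w n (enc j (m+1)) = 0 := by
  rw [Q_coe, if_neg]
  intro hmem
  rcases Finset.mem_insert.1 hmem with h | hmem'
  · exact enc_ne_zero j (m+1) h
  rcases Finset.mem_insert.1 hmem' with h | h
  · have := (enc_inj h).2; omega
  · rcases Finset.mem_image.1 h with ⟨k, hk, hk2⟩
    obtain ⟨h1, h2⟩ := enc_inj hk2
    have := hj h1.symm
    have := Finset.mem_range.1 hk
    omega

lemma Q_norm_le (x w : ℓ2) (n : ℕ) (hw : ‖w‖ ≤ 1) : ‖Qpt x w n‖ ≤ ‖x‖ := by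
  have hsq : ‖Qpt x w n‖ ^ 2 ≤ ‖x‖ ^ 2 := by
    rw [Q_eq_sum, norm_sum_single_sq]
    rw [Qset, Finset.sum_insert (notmem0 n), Finset.sum_insert (notmem1 n),
      Finset.sum_image (encinj n)]
    have e2 : ∀ k ∈ Finset.range (n+1),
        ‖Qval x w n (enc n (k+1))‖^2 = ‖(x 1/2) * w k‖^2 := fun k _ => by rw [Qval_coordk]
    rw [Qval_zero, Qval_marker, Finset.sum_congr rfl e2]
    have hsum : ∑ k ∈ Finset.range (n+1), ‖(x 1/2) * w k‖^2 ≤ ‖x 1 / 2‖^2 * 1 := by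
      have he : ∑ k ∈ Finset.range (n+1), ‖(x 1/2) * w k‖^2
          = ‖x 1 / 2‖^2 * ∑ k ∈ Finset.range (n+1), ‖w k‖^2 := by
        rw [Finset.mul_sum]
        exact Finset.sum_congr rfl fun k _ => by rw [norm_mul, mul_pow]
      rw [he]
      refine mul_le_mul_of_nonneg_left ?_ (by positivity)
      calc ∑ k ∈ Finset.range (n+1), ‖w k‖^2 ≤ ‖w‖^2 := coord_sq_le w _
      _ ≤ 1 := by nlinarith [norm_nonneg w]
    have hx01 : ‖x 0‖^2 + ‖x 1‖^2 ≤ ‖x‖^2 := by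
      have := coord_sq_le x {0, 1}
      simpa using this
    have hhalf : ‖x 1 / 2‖^2 = ‖x 1‖^2/4 := by
      rw [norm_div, div_pow]
      norm_num
    nlinarith [sq_nonneg ‖x 1‖]
  nlinarith [norm_nonneg (Qpt x w n), norm_nonneg x]

lemma cs_coords (u v : ℓ2) (c d N : ℕ) :
    ‖∑ j ∈ Finset.range N, u (enc j c) * v (enc j d)‖ ≤ ‖u‖ * ‖v‖ := by
  have h1 : ‖∑ j ∈ Finset.range N, u (enc j c) * v (enc j d)‖
      ≤ ∑ j ∈ Finset.range N, ‖u (enc j c)‖ * ‖v (enc j d)‖ := by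
    refine (norm_sum_le _ _).trans ?_
    exact Finset.sum_le_sum fun j _ => by rw [norm_mul]
  have h2 := Real.sum_mul_le_sqrt_mul_sqrt (Finset.range N)
    (fun j => ‖u (enc j c)‖) (fun j => ‖v (enc j d)‖)
  have h3 : ∀ (y : ℓ2) (e : ℕ), ∑ j ∈ Finset.range N, ‖y (enc j e)‖ ^ 2 ≤ ‖y‖ ^ 2 := by
    intro y e
    have hinj : ∀ a ∈ Finset.range N, ∀ b ∈ Finset.range N, enc a e = enc b e → a = b :=
      fun a _ b _ h => (enc_inj h).1
    calc ∑ j ∈ Finset.range N, ‖y (enc j e)‖ ^ 2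
        = ∑ j ∈ (Finset.range N).image (fun j => enc j e), ‖y j‖ ^ 2 :=
          by rw [Finset.sum_image hinj]
    _ ≤ ‖y‖ ^ 2 := coord_sq_le y _
  have h4 : Real.sqrt (∑ j ∈ Finset.range N, ‖u (enc j c)‖ ^ 2) ≤ ‖u‖ := by
    refine Real.sqrt_le_sqrt (h3 u c) |>.trans ?_
    rw [Real.sqrt_sq (norm_nonneg u)]
  have h5 : Real.sqrt (∑ j ∈ Finset.range N, ‖v (enc j d)‖ ^ 2) ≤ ‖v‖ := by
    refine Real.sqrt_le_sqrt (h3 v d) |>.trans ?_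
    rw [Real.sqrt_sq (norm_nonneg v)]
  calc ‖∑ j ∈ Finset.range N, u (enc j c) * v (enc j d)‖
      ≤ ∑ j ∈ Finset.range N, ‖u (enc j c)‖ * ‖v (enc j d)‖ := h1
  _ ≤ Real.sqrt (∑ j ∈ Finset.range N, ‖u (enc j c)‖ ^ 2) *
      Real.sqrt (∑ j ∈ Finset.range N, ‖v (enc j d)‖ ^ 2) := h2
  _ ≤ ‖u‖ * ‖v‖ := by
      refine mul_le_mul h4 h5 (Real.sqrt_nonneg _) (norm_nonneg u)

/-- Partial sums of the coordinate-extraction functionals. -/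
def pf (m N : ℕ) (y : ℓ2) : ℂ := ∑ j ∈ Finset.range N, y (enc j 0) * y (enc j (m+1))

lemma pf_abs (m N : ℕ) (y : ℓ2) : ‖pf m N y‖ ≤ ‖y‖ ^ 2 := by
  rw [pf]
  calc ‖∑ j ∈ Finset.range N, y (enc j 0) * y (enc j (m+1))‖ ≤ ‖y‖ * ‖y‖ := cs_coords y y 0 (m+1) N
  _ = ‖y‖ ^ 2 := (sq ‖y‖).symm

lemma pf_lip (m N : ℕ) (y z : ℓ2) :
    ‖pf m N y - pf m N z‖ ≤ (‖y‖ + ‖z‖) * ‖y - z‖ := by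
  have hdiff : pf m N y - pf m N z
      = (∑ j ∈ Finset.range N, y (enc j 0) * (y - z) (enc j (m+1)))
        + ∑ j ∈ Finset.range N, (y - z) (enc j 0) * z (enc j (m+1)) := by
    rw [pf, pf, ← Finset.sum_add_distrib, ← Finset.sum_sub_distrib]
    refine Finset.sum_congr rfl fun j _ => ?_
    rw [lp.coeFn_sub, Pi.sub_apply, Pi.sub_apply]
    ring
  rw [hdiff]
  calc ‖(∑ j ∈ Finset.range N, y (enc j 0) * (y - z) (enc j (m+1)))
        + ∑ j ∈ Finset.range N, (y - z) (enc j 0) * z (enc j (m+1))‖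
      ≤ ‖∑ j ∈ Finset.range N, y (enc j 0) * (y - z) (enc j (m+1))‖
        + ‖∑ j ∈ Finset.range N, (y - z) (enc j 0) * z (enc j (m+1))‖ := norm_add_le _ _
  _ ≤ ‖y‖ * ‖y - z‖ + ‖y - z‖ * ‖z‖ := add_le_add (cs_coords _ _ _ _ _) (cs_coords _ _ _ _ _)
  _ = (‖y‖ + ‖z‖) * ‖y - z‖ := by ring

lemma pf_diff (m N : ℕ) : Differentiable ℂ (pf m N) := by
  apply Differentiable.fun_sum
  intro j _
  exact ((coordCLM (enc j 0)).differentiable).mul ((coordCLM (enc j (m+1))).differentiable)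

/-- The coordinate-extraction functions in `𝒜ᵤ(B)`. -/
def fm (m : ℕ) (y : ℓ2) : ℂ := limUnder (UF : Filter ℕ) (fun N => pf m N y)

lemma fm_lim (m : ℕ) (y : ℓ2) :
    Filter.Tendsto (fun N => pf m N y) (UF : Filter ℕ) (nhds (fm m y)) :=
  ulim_tendsto (fun N => pf_abs m N y)

lemma fm_MemAu (m : ℕ) : MemAu (fm m) := by
  constructor
  · refine ulim_diffOn Metric.isOpen_ball (fun N => pf m N) (M := 1) ?_ ?_
    · exact fun N => (pf_diff m N).differentiableOn
    · intro N y hy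
      have hy1 : ‖y‖ ≤ 1 := (mem_ball_zero_iff.1 hy).le
      calc ‖pf m N y‖ ≤ ‖y‖^2 := pf_abs m N y
      _ ≤ 1 := by nlinarith [norm_nonneg y]
  · rw [Metric.uniformContinuousOn_iff]
    intro ε hε
    refine ⟨ε/2, by positivity, ?_⟩
    intro y hy z hz hd
    have hy1 : ‖y‖ ≤ 1 := (mem_ball_zero_iff.1 hy).le
    have hz1 : ‖z‖ ≤ 1 := (mem_ball_zero_iff.1 hz).le
    have hlim : Filter.Tendsto (fun N => pf m N y - pf m N z) (UF : Filter ℕ)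
        (nhds (fm m y - fm m z)) := (fm_lim m y).sub (fm_lim m z)
    have hb : ‖fm m y - fm m z‖ ≤ 2 * ‖y - z‖ := by
      refine le_of_tendsto hlim.norm (Filter.Eventually.of_forall fun N => ?_)
      calc ‖pf m N y - pf m N z‖ ≤ (‖y‖ + ‖z‖) * ‖y - z‖ := pf_lip m N y z
      _ ≤ 2 * ‖y - z‖ := by
          apply mul_le_mul_of_nonneg_right _ (norm_nonneg _)
          linarith
    rw [dist_eq_norm] at hd ⊢
    calc ‖fm m y - fm m z‖ ≤ 2 * ‖y - z‖ := hb
    _ < 2 * (ε/2) := by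
        apply mul_lt_mul_of_pos_left hd
        norm_num
    _ = ε := by ring

lemma fm_at_Q (x w : ℓ2) (m n : ℕ) (hn : m ≤ n) :
    fm m (Qpt x w n) = (x 1 / 2)^2 * w m := by
  have hev : ∀ N, n + 1 ≤ N → pf m N (Qpt x w n) = (x 1 / 2)^2 * w m := by
    intro N hN
    rw [pf]
    rw [Finset.sum_eq_single n]
    · rw [Q_apply_marker, Q_apply_coordk x w n m hn]
      ring
    · intro j hj hjn
      rw [Q_apply_enc_marker_ne x w n j hjn, zero_mul]
    · intro hn'
      exact absurd (Finset.mem_range.2 (by omega)) hn'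
  have htend : Filter.Tendsto (fun N => pf m N (Qpt x w n)) (UF : Filter ℕ)
      (nhds ((x 1 / 2)^2 * w m)) := by
    have h1 : ∀ᶠ N in (Filter.atTop : Filter ℕ), pf m N (Qpt x w n) = (x 1 / 2)^2 * w m :=
      Filter.eventually_atTop.2 ⟨n+1, hev⟩
    have h2 : ∀ᶠ N in (UF : Filter ℕ), pf m N (Qpt x w n) = (x 1 / 2)^2 * w m :=
      UF_le h1
    have h2' : (fun N => pf m N (Qpt x w n)) =ᶠ[(UF : Filter ℕ)]
        (fun _ => (x 1 / 2)^2 * w m) := h2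
    exact Filter.Tendsto.congr' h2'.symm tendsto_const_nhds
  exact htend.limUnder_eq

lemma zero_mem_oB : (0:ℓ2) ∈ oB := mem_ball_zero_iff.2 (by norm_num)

instance : Nonempty ↥oB := ⟨⟨0, zero_mem_oB⟩⟩

lemma le_supNorm {f : ℓ2 → ℂ} {M : ℝ} (hM : ∀ y ∈ oB, ‖f y‖ ≤ M)
    {x : ℓ2} (hx : x ∈ oB) : ‖f x‖ ≤ supNorm f := by
  show ‖f x‖ ≤ ⨆ y : ↥oB, ‖f (y : ℓ2)‖
  have hb : BddAbove (Set.range fun y : ↥oB => ‖f (y : ℓ2)‖) := by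
    refine ⟨M, ?_⟩
    rintro r ⟨y, rfl⟩
    exact hM y y.2
  exact le_ciSup hb (⟨x, hx⟩ : ↥oB)

lemma supNorm_le {f : ℓ2 → ℂ} {M : ℝ} (hM : ∀ y ∈ oB, ‖f y‖ ≤ M) : supNorm f ≤ M :=
  ciSup_le fun y => hM y y.2

lemma le_supNormV {f : ℓ2 → ℓ2} {M : ℝ} (hM : ∀ y ∈ oB, ‖f y‖ ≤ M)
    {x : ℓ2} (hx : x ∈ oB) : ‖f x‖ ≤ supNormV f := by
  show ‖f x‖ ≤ ⨆ y : ↥oB, ‖f (y : ℓ2)‖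
  have hb : BddAbove (Set.range fun y : ↥oB => ‖f (y : ℓ2)‖) := by
    refine ⟨M, ?_⟩
    rintro r ⟨y, rfl⟩
    exact hM y y.2
  exact le_ciSup hb (⟨x, hx⟩ : ↥oB)

lemma supNormV_le {f : ℓ2 → ℓ2} {M : ℝ} (hM : ∀ y ∈ oB, ‖f y‖ ≤ M) : supNormV f ≤ M :=
  ciSup_le fun y => hM y y.2

/-- A uniformly continuous function on the ball is bounded. -/
lemma boundOfUC {f : ℓ2 → ℂ} (hf : UniformContinuousOn f oB) :
    ∃ M, 0 ≤ M ∧ ∀ y ∈ oB, ‖f y‖ ≤ M := by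
  obtain ⟨δ, hδ, H⟩ := Metric.uniformContinuousOn_iff.1 hf 1 one_pos
  have key : ∀ N : ℕ, ∀ y ∈ oB, ‖y‖ ≤ N * (δ/2) → ‖f y‖ ≤ ‖f 0‖ + N := by
    intro N
    induction N with
    | zero =>
      intro y hy hyn
      have : y = 0 := by
        rw [← norm_le_zero_iff]
        simpa using hyn
      simp [this]
    | succ N ih =>
      intro y hy hyn
      by_cases hcase : ‖y‖ ≤ N * (δ/2)
      · have := ih y hy hcase
        push_cast
        push_cast at this
        linarith
      · push_neg at hcase
        have hy0 : 0 < ‖y‖ := lt_of_le_of_lt (by positivity) hcase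
        set t : ℝ := (N * (δ/2)) / ‖y‖ with htdef
        have ht0 : 0 ≤ t := by positivity
        have ht1 : t ≤ 1 := by
          rw [htdef, div_le_one hy0]
          exact hcase.le
        set y' : ℓ2 := ((t:ℝ):ℂ) • y with hy'def
        have hny' : ‖y'‖ = N * (δ/2) := by
          rw [hy'def, norm_smul]
          simp only [Complex.norm_real, Real.norm_eq_abs, abs_of_nonneg ht0]
          rw [htdef, div_mul_cancel₀ _ hy0.ne']
        have hy'B : y' ∈ oB := by
          refine mem_ball_zero_iff.2 ?_
          rw [hny']
          exact lt_trans hcase (mem_ball_zero_iff.1 hy)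
        have hdist : dist y y' < δ := by
          rw [dist_eq_norm]
          have : y - y' = ((1 - t : ℝ):ℂ) • y := by
            rw [hy'def]
            push_cast
            rw [sub_smul, one_smul]
          rw [this, norm_smul]
          simp only [Complex.norm_real, Real.norm_eq_abs, abs_of_nonneg (by linarith : (0:ℝ) ≤ 1 - t)]
          have he : (1 - t) * ‖y‖ = ‖y‖ - N * (δ/2) := by
            rw [sub_mul, one_mul, htdef, div_mul_cancel₀ _ hy0.ne']
          rw [he]
          have : ‖y‖ ≤ (N+1) * (δ/2) := by push_cast at hyn; linarith [hyn]
          push_cast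
          linarith
        have hfd := H y hy y' hy'B hdist
        rw [dist_eq_norm] at hfd
        have hIH := ih y' hy'B (le_of_eq hny')
        have hstep : ‖f y‖ ≤ ‖f y'‖ + ‖f y - f y'‖ := by
          have := norm_add_le (f y') (f y - f y')
          simpa using this
        push_cast
        push_cast at hIH
        linarith
  set N₀ : ℕ := ⌈(2:ℝ)/δ⌉₊ with hN₀
  have hN : 1 ≤ (N₀ : ℝ) * (δ/2) := by
    have h1 : (2:ℝ)/δ ≤ N₀ := Nat.le_ceil _
    calc (1:ℝ) = (2/δ) * (δ/2) := by field_simp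
    _ ≤ N₀ * (δ/2) := by
        apply mul_le_mul_of_nonneg_right h1 (by positivity)
  refine ⟨‖f 0‖ + N₀, by positivity, fun y hy => ?_⟩
  exact key N₀ y hy (le_trans (mem_ball_zero_iff.1 hy).le hN)

/-- The truncation used to make the construction total. -/
def hgood (h : ℓ2 → ℓ2) : ℓ2 → ℓ2 :=
  @ite _ (h ∈ ballHV) (Classical.propDecidable _) h (fun _ => 0)

lemma hgood_eq {h : ℓ2 → ℓ2} (hh : h ∈ ballHV) : hgood h = h := by
  unfold hgood
  split_ifs
  rfl

lemma hgood_diff (h : ℓ2 → ℓ2) : DifferentiableOn ℂ (hgood h) oB := by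
  unfold hgood
  split_ifs with hc
  · exact hc.1.1
  · exact differentiableOn_const 0

lemma norm_le_of_ballHV {h : ℓ2 → ℓ2} (hh : h ∈ ballHV) {x : ℓ2} (hx : x ∈ oB) :
    ‖h x‖ ≤ 1 := by
  obtain ⟨⟨_, C, hC⟩, hlt⟩ := hh
  exact (le_supNormV hC hx).trans hlt.le

lemma hgood_norm (h : ℓ2 → ℓ2) {x : ℓ2} (hx : x ∈ oB) : ‖hgood h x‖ ≤ 1 := by
  unfold hgood
  split_ifs with hc
  · exact norm_le_of_ballHV hc hx
  · simp

lemma Qmem {x : ℓ2} (hx : x ∈ oB) {w : ℓ2} (hw : ‖w‖ ≤ 1) (n : ℕ) : Qpt x w n ∈ oB :=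
  mem_ball_zero_iff.2 ((Q_norm_le x w n hw).trans_lt (mem_ball_zero_iff.1 hx))

/-- The underlying map of the homomorphism `Ψ(h)`. -/
def PsiFun (h : ℓ2 → ℓ2) (f : ℓ2 → ℂ) (x : ℓ2) : ℂ :=
  limUnder (UF : Filter ℕ) (fun n => f (Qpt x (hgood h x) n))

lemma Psi_tendsto (h : ℓ2 → ℓ2) {f : ℓ2 → ℂ} {x : ℓ2} (hx : x ∈ oB)
    {M : ℝ} (hM : ∀ y ∈ oB, ‖f y‖ ≤ M) :
    Filter.Tendsto (fun n => f (Qpt x (hgood h x) n)) (UF : Filter ℕ)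
      (nhds (PsiFun h f x)) :=
  ulim_tendsto (fun n => hM _ (Qmem hx (hgood_norm h hx) n))

lemma QptDiff (w : ℓ2 → ℓ2) (hw : DifferentiableOn ℂ w oB) (n : ℕ) :
    DifferentiableOn ℂ (fun x => Qpt x (w x) n) oB := by
  have he : (fun x => Qpt x (w x) n)
      = fun x => (x 0) • (lp.single 2 0 1 : ℓ2)
        + ((x 1)/2) • (lp.single 2 (enc n 0) 1 : ℓ2)
        + ∑ k ∈ Finset.range (n+1),
            (((x 1)/2) * w x k) • (lp.single 2 (enc n (k+1)) 1 : ℓ2) := by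
    funext x
    simp only [Qpt, single_of_mul]
  rw [he]
  have hc0 : DifferentiableOn ℂ (fun x : ℓ2 => x 0) oB :=
    (coordCLM 0).differentiable.differentiableOn
  have hc1 : DifferentiableOn ℂ (fun x : ℓ2 => (x 1)/2) oB := by
    have h1 : DifferentiableOn ℂ (fun x : ℓ2 => coordCLM 1 x) oB :=
      (coordCLM 1).differentiable.differentiableOn
    have h2 : (fun x : ℓ2 => (x 1)/2) = fun x : ℓ2 => coordCLM 1 x * (2⁻¹:ℂ) :=
      funext fun x => by rw [div_eq_mul_inv]; rfl
    rw [h2]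
    exact h1.mul_const _
  refine DifferentiableOn.add (DifferentiableOn.add ?_ ?_) ?_
  · exact hc0.smul_const _
  · exact hc1.smul_const _
  · refine DifferentiableOn.fun_sum fun k _ => ?_
    refine DifferentiableOn.smul_const ?_ _
    refine hc1.mul ?_
    exact (coordCLM k).differentiable.comp_differentiableOn hw

/-- `Ψ(h)` as an element of the vector-valued spectrum. -/
def Psi (h : ℓ2 → ℓ2) : MuInfHom where
  toFun := PsiFun h
  maps_mem := by
    intro f hf
    obtain ⟨M, hM0, hM⟩ := boundOfUC hf.2
    constructor
    · refine ulim_diffOn Metric.isOpen_ball (fun n x => f (Qpt x (hgood h x) n)) (M := M) ?_ ?_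
      · intro n
        refine DifferentiableOn.comp hf.1 (QptDiff (hgood h) (hgood_diff h) n) ?_
        intro x hx
        exact Qmem hx (hgood_norm h hx) n
      · intro n x hx
        exact hM _ (Qmem hx (hgood_norm h hx) n)
    · refine ⟨M, fun x hx => ?_⟩
      exact le_of_tendsto (Psi_tendsto h hx hM).norm
        (Filter.Eventually.of_forall fun n => hM _ (Qmem hx (hgood_norm h hx) n))
  map_add := by
    intro f g hf hg x hx
    obtain ⟨Mf, _, hMf⟩ := boundOfUC hf.2
    obtain ⟨Mg, _, hMg⟩ := boundOfUC hg.2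
    have tf := Psi_tendsto h hx hMf
    have tg := Psi_tendsto h hx hMg
    have hsum : Filter.Tendsto (fun n => (f + g) (Qpt x (hgood h x) n)) (UF : Filter ℕ)
        (nhds (PsiFun h f x + PsiFun h g x)) := by
      simpa using tf.add tg
    exact hsum.limUnder_eq
  map_mul := by
    intro f g hf hg x hx
    obtain ⟨Mf, _, hMf⟩ := boundOfUC hf.2
    obtain ⟨Mg, _, hMg⟩ := boundOfUC hg.2
    have tf := Psi_tendsto h hx hMf
    have tg := Psi_tendsto h hx hMg
    have hmul : Filter.Tendsto (fun n => (f * g) (Qpt x (hgood h x) n)) (UF : Filter ℕ)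
        (nhds (PsiFun h f x * PsiFun h g x)) := by
      simpa using tf.mul tg
    exact hmul.limUnder_eq
  map_smul := by
    intro c f hf x hx
    obtain ⟨Mf, _, hMf⟩ := boundOfUC hf.2
    have tf := Psi_tendsto h hx hMf
    have hs : Filter.Tendsto (fun n => (c • f) (Qpt x (hgood h x) n)) (UF : Filter ℕ)
        (nhds (c * PsiFun h f x)) := by
      simpa [smul_eq_mul] using tf.const_mul c
    exact hs.limUnder_eq
  respects := by
    intro f g hf hg hEq x hx
    have : (fun n => f (Qpt x (hgood h x) n)) = fun n => g (Qpt x (hgood h x) n) :=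
      funext fun n => hEq (Qmem hx (hgood_norm h hx) n)
    unfold PsiFun
    rw [this]
  nonzero := by
    have hUC : UniformContinuousOn (fun _ : ℓ2 => (1:ℂ)) oB := by
      rw [Metric.uniformContinuousOn_iff]
      intro ε hε
      exact ⟨1, one_pos, fun _ _ _ _ _ => by simpa using hε⟩
    refine ⟨fun _ => 1, ⟨differentiableOn_const 1, hUC⟩, 0, zero_mem_oB, ?_⟩
    have h1 : PsiFun h (fun _ => 1) 0 = 1 :=
      (tendsto_const_nhds :
        Filter.Tendsto (fun _ : ℕ => (1:ℂ)) (UF : Filter ℕ) (nhds 1)).limUnder_eq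
    rw [h1]
    norm_num
  cont := by
    refine ⟨1, fun f hf x hx => ?_⟩
    obtain ⟨M, hM0, hM⟩ := boundOfUC hf.2
    rw [one_mul]
    exact le_of_tendsto (Psi_tendsto h hx hM).norm
      (Filter.Eventually.of_forall fun n => le_supNorm hM (Qmem hx (hgood_norm h hx) n))

lemma Psi_fm (h : ℓ2 → ℓ2) (hh : h ∈ ballHV) (m : ℕ) (x : ℓ2) :
    PsiFun h (fm m) x = (x 1 / 2)^2 * (h x m) := by
  unfold PsiFun
  rw [hgood_eq hh]
  have hev : ∀ᶠ n in (Filter.atTop : Filter ℕ),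
      fm m (Qpt x (h x) n) = (x 1/2)^2 * h x m :=
    Filter.eventually_atTop.2 ⟨m, fun n hn => fm_at_Q x (h x) m n hn⟩
  have h2' : (fun n => fm m (Qpt x (h x) n)) =ᶠ[(UF : Filter ℕ)]
      (fun _ => (x 1/2)^2 * h x m) := UF_le hev
  exact (Filter.Tendsto.congr' h2'.symm tendsto_const_nhds).limUnder_eq

lemma Psi_coord0 (h : ℓ2 → ℓ2) (x : ℓ2) : PsiFun h (coord 0) x = x 0 := by
  unfold PsiFun
  have he : (fun n => coord 0 (Qpt x (hgood h x) n)) = fun _ => x 0 :=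
    funext fun n => Q_apply_zero x (hgood h x) n
  rw [he]
  exact (tendsto_const_nhds :
    Filter.Tendsto (fun _ : ℕ => x 0) (UF : Filter ℕ) (nhds (x 0))).limUnder_eq

lemma Psi_coordm (h : ℓ2 → ℓ2) (m : ℕ) (hm : 1 ≤ m) (x : ℓ2) :
    PsiFun h (coord m) x = 0 := by
  unfold PsiFun
  have hev : ∀ᶠ n in (Filter.atTop : Filter ℕ),
      coord m (Qpt x (hgood h x) n) = 0 :=
    Filter.eventually_atTop.2 ⟨m, fun n hn => Q_apply_small x (hgood h x) n m hm hn⟩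
  have h2' : (fun n => coord m (Qpt x (hgood h x) n)) =ᶠ[(UF : Filter ℕ)]
      (fun _ => (0:ℂ)) := UF_le hev
  exact (Filter.Tendsto.congr' h2'.symm tendsto_const_nhds).limUnder_eq

lemma gnorm (c : ℂ) : ‖(lp.single 2 0 c : ℓ2)‖ = ‖c‖ := by
  have := lp.norm_single (p := 2) (E := fun _ : ℕ => ℂ) (by norm_num)
    0 c
  simpa using this

lemma QptDiffZ (x a b : ℓ2) (n : ℕ) : Differentiable ℂ (fun z : ℂ => Qpt x (a + z • b) n) := by
  have hco : ∀ (z : ℂ) (k : ℕ), ((a + z • b : ℓ2) k) = a k + z * b k := by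
    intro z k
    rw [lp.coeFn_add, Pi.add_apply, lp.coeFn_smul, Pi.smul_apply, smul_eq_mul]
  have he : (fun z : ℂ => Qpt x (a + z • b) n)
      = fun z => lp.single 2 0 (x 0) + (x 1/2) • (lp.single 2 (enc n 0) 1 : ℓ2)
        + ∑ k ∈ Finset.range (n+1),
            ((x 1/2) * (a k + z * b k)) • (lp.single 2 (enc n (k+1)) 1 : ℓ2) := by
    funext z
    rw [Qpt, show (∑ k ∈ Finset.range (n+1),
        ((x 1/2) * (a + z • b : ℓ2) k) • (lp.single 2 (enc n (k+1)) 1 : ℓ2))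
        = ∑ k ∈ Finset.range (n+1),
        ((x 1/2) * (a k + z * b k)) • (lp.single 2 (enc n (k+1)) 1 : ℓ2) from
      Finset.sum_congr rfl fun k _ => by rw [hco]]
  rw [he]
  refine Differentiable.add (differentiable_const _) ?_
  refine Differentiable.fun_sum fun k _ => ?_
  refine Differentiable.smul_const ?_ _
  exact ((differentiable_id.mul_const (b k)).const_add (a k)).const_mul (x 1 / 2)

lemma hplus_apply (h k : ℓ2 → ℓ2) (z : ℂ) (x : ℓ2) :
    (h + z • k) x = h x + z • k x := rfl

lemma Sopen (h k : ℓ2 → ℓ2) (hh : h ∈ ballHV) (hk : MemHinfV k) :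
    IsOpen {z : ℂ | (h + z • k) ∈ ballHV} := by
  obtain ⟨Ck0, hCk0⟩ := hk.2
  set Ck : ℝ := max Ck0 0 with hCkdef
  have hCk : ∀ x ∈ oB, ‖k x‖ ≤ Ck := fun x hx => (hCk0 x hx).trans (le_max_left _ _)
  have hCknn : 0 ≤ Ck := le_max_right _ _
  have hmemAll : ∀ z : ℂ, MemHinfV (h + z • k) := by
    intro z
    constructor
    · exact hh.1.1.add (hk.1.const_smul z)
    · obtain ⟨Ch, hCh⟩ := hh.1.2
      refine ⟨Ch + ‖z‖ * Ck, fun x hx => ?_⟩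
      rw [hplus_apply]
      calc ‖h x + z • k x‖ ≤ ‖h x‖ + ‖z • k x‖ := norm_add_le _ _
      _ ≤ Ch + ‖z‖ * Ck := by
          rw [norm_smul]
          exact add_le_add (hCh x hx)
            (mul_le_mul_of_nonneg_left (hCk x hx) (norm_nonneg z))
  rw [Metric.isOpen_iff]
  intro z₀ hz₀
  have hσ : supNormV (h + z₀ • k) < 1 := hz₀.2
  refine ⟨(1 - supNormV (h + z₀ • k))/(Ck + 1), div_pos (by linarith) (by linarith), ?_⟩
  intro z hz
  rw [Metric.mem_ball, dist_eq_norm] at hz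
  refine ⟨hmemAll z, ?_⟩
  obtain ⟨C₀, hC₀⟩ := (hmemAll z₀).2
  have hbd : ∀ x ∈ oB, ‖(h + z • k) x‖
      ≤ supNormV (h + z₀ • k) + ‖z - z₀‖ * Ck := by
    intro x hx
    have hrw : (h + z • k) x = (h + z₀ • k) x + (z - z₀) • k x := by
      rw [hplus_apply, hplus_apply]
      rw [sub_smul]
      abel
    rw [hrw]
    calc ‖(h + z₀ • k) x + (z - z₀) • k x‖
        ≤ ‖(h + z₀ • k) x‖ + ‖(z - z₀) • k x‖ := norm_add_le _ _
    _ ≤ supNormV (h + z₀ • k) + ‖z - z₀‖ * Ck := by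
        rw [norm_smul]
        exact add_le_add (le_supNormV hC₀ hx)
          (mul_le_mul_of_nonneg_left (hCk x hx) (norm_nonneg _))
  have := supNormV_le hbd
  have hlt : ‖z - z₀‖ * Ck < (1 - supNormV (h + z₀ • k)) := by
    calc ‖z - z₀‖ * Ck ≤ ‖z - z₀‖ * (Ck + 1) :=
          mul_le_mul_of_nonneg_left (by linarith) (norm_nonneg _)
    _ < ((1 - supNormV (h + z₀ • k))/(Ck + 1)) * (Ck + 1) :=
          mul_lt_mul_of_pos_right hz (by positivity)
    _ = 1 - supNormV (h + z₀ • k) := by field_simp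
  linarith


/-- for `g(x) = ⟨x,e₁⟩e₁` one has `‖g‖ = 1`, `g(B) ⊆ B`, and there is an
analytic injection of the open unit ball of `ℋ^∞(B,ℓ2)` into the fiber `𝓕(g)`. -/
theorem stmt7 (g : ℓ2 → ℓ2) (hgdef : ∀ x : ℓ2, g x = lp.single 2 0 (x 0)) :
    MemHinfV g ∧ supNormV g = 1 ∧ (∀ x ∈ oB, g x ∈ oB) ∧
    ∃ Ψ : (ℓ2 → ℓ2) → MuInfHom,
      -- injectivity (as homomorphisms, with functions identified on B)
      (∀ h₁ ∈ ballHV, ∀ h₂ ∈ ballHV,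
        (∀ f, MemAu f → ∀ x ∈ oB, (Ψ h₁).toFun f x = (Ψ h₂).toFun f x) →
        Set.EqOn h₁ h₂ oB) ∧
      -- the image of Ψ is contained in the fiber 𝓕(g)
      (∀ h ∈ ballHV, xiEq (Ψ h) g) ∧
      -- analyticity: for every f ∈ 𝒜ᵤ(B) and x ∈ B, h ↦ Ψ(h)(f)(x) is holomorphic
      (∀ f, MemAu f → ∀ x ∈ oB, HolomorphicOnBallHV (fun h => (Ψ h).toFun f x)) := by
  have hgnorm : ∀ x : ℓ2, ‖g x‖ = ‖x 0‖ := fun x => by rw [hgdef x, gnorm]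
  have hgb : ∀ x ∈ oB, ‖g x‖ ≤ 1 := by
    intro x hx
    rw [hgnorm]
    exact (lp.norm_apply_le_norm (by norm_num : (2:ENNReal) ≠ 0) x 0).trans
      (mem_ball_zero_iff.1 hx).le
  refine ⟨⟨?_, 1, hgb⟩, ?_, ?_, ?_⟩
  · -- differentiability of g
    have he : g = fun x => (x 0) • (lp.single 2 0 1 : ℓ2) := by
      funext x
      rw [hgdef x, ← single_of_mul]
    rw [he]
    exact ((coordCLM 0).differentiable.differentiableOn).smul_const _
  · -- supNormV g = 1
    refine le_antisymm (supNormV_le hgb) ?_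
    refine le_of_forall_lt fun c hc => ?_
    rcases lt_or_ge c 0 with hc0 | hc0
    · have : (0:ℝ) ≤ supNormV g := by
        have := le_supNormV hgb zero_mem_oB
        exact (norm_nonneg _).trans this
      linarith
    · set r : ℝ := (c+1)/2 with hrdef
      have hr1 : r < 1 := by rw [hrdef]; linarith
      have hcr : c < r := by rw [hrdef]; linarith
      set xr : ℓ2 := lp.single 2 0 ((r:ℝ):ℂ) with hxrdef
      have hxrnorm : ‖xr‖ = r := by
        rw [hxrdef, gnorm]
        simp [abs_of_nonneg (by linarith : (0:ℝ) ≤ r)]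
      have hxrB : xr ∈ oB := mem_ball_zero_iff.2 (by rw [hxrnorm]; exact hr1)
      have hgxr : ‖g xr‖ = r := by
        rw [hgnorm, hxrdef, lp.single_apply_self]
        simp [abs_of_nonneg (by linarith : (0:ℝ) ≤ r)]
      calc c < r := hcr
      _ = ‖g xr‖ := hgxr.symm
      _ ≤ supNormV g := le_supNormV hgb hxrB
  · -- g maps oB into oB
    intro x hx
    refine mem_ball_zero_iff.2 ?_
    rw [hgnorm]
    exact lt_of_le_of_lt (lp.norm_apply_le_norm (by norm_num : (2:ENNReal) ≠ 0) x 0)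
      (mem_ball_zero_iff.1 hx)
  · -- the analytic injection
    refine ⟨Psi, ?_, ?_, ?_⟩
    · -- injectivity
      intro h₁ hh₁ h₂ hh₂ heq
      have hkey : ∀ x' ∈ oB, x' 1 ≠ 0 → h₁ x' = h₂ x' := by
        intro x' hx' hx1
        refine lp.ext (funext fun m => ?_)
        have e1 := Psi_fm h₁ hh₁ m x'
        have e2 := Psi_fm h₂ hh₂ m x'
        have e3 := heq (fm m) (fm_MemAu m) x' hx'
        have e4 : (x' 1 / 2)^2 * (h₁ x' m) = (x' 1 / 2)^2 * (h₂ x' m) := by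
          rw [← e1, ← e2]
          exact e3
        have hne : (x' 1 / 2)^2 ≠ 0 := by
          apply pow_ne_zero
          exact div_ne_zero hx1 two_ne_zero
        exact mul_left_cancel₀ hne e4
      intro x hx
      by_cases hx1 : x 1 ≠ 0
      · exact hkey x hx hx1
      · push_neg at hx1
        -- approximate by points with nonzero second coordinate
        have hoB : IsOpen oB := Metric.isOpen_ball
        set δ : ℝ := (1 - ‖x‖)/2 with hδdef
        have hδ : 0 < δ := by
          have := mem_ball_zero_iff.1 hx
          rw [hδdef]; linarith
        set y : ℕ → ℓ2 := fun j => x + (((δ/(j+1):ℝ)):ℂ) • lp.single 2 1 1 with hydef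
        have hsn : ‖(lp.single 2 1 1 : ℓ2)‖ = 1 := by
          have := lp.norm_single (p := 2) (E := fun _ : ℕ => ℂ) (by norm_num)
            1 (1:ℂ)
          simpa using this
        have hyB : ∀ j, y j ∈ oB := by
          intro j
          refine mem_ball_zero_iff.2 ?_
          have h1 : ‖y j‖ ≤ ‖x‖ + (δ/(j+1)) * 1 := by
            rw [hydef]
            refine (norm_add_le _ _).trans ?_
            rw [norm_smul, hsn]
            simp only [Complex.norm_real, Real.norm_eq_abs]
            rw [abs_of_nonneg (by positivity)]
          have h2 : δ/(j+1) ≤ δ := by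
            apply div_le_self hδ.le
            push_cast
            linarith [Nat.cast_nonneg (α := ℝ) j]
          have := mem_ball_zero_iff.1 hx
          rw [hδdef] at h1 h2
          nlinarith
        have hy1 : ∀ j, (y j) 1 ≠ 0 := by
          intro j
          rw [hydef]
          have : ((x + (((δ/(j+1):ℝ)):ℂ) • lp.single 2 1 1 : ℓ2)) 1
              = x 1 + ((δ/(j+1):ℝ):ℂ) * 1 := by
            rw [lp.coeFn_add, Pi.add_apply, lp.coeFn_smul, Pi.smul_apply,
              lp.single_apply_self, smul_eq_mul]
          rw [this, hx1, zero_add, mul_one]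
          exact Complex.ofReal_ne_zero.2 (by positivity : (0:ℝ) < δ/(j+1)).ne'
        have hytend : Filter.Tendsto y Filter.atTop (nhds x) := by
          rw [Metric.tendsto_atTop]
          intro ε hε
          obtain ⟨N, hN⟩ := exists_nat_gt (δ/ε)
          refine ⟨N, fun j hj => ?_⟩
          rw [dist_eq_norm, hydef]
          have h1 : ‖x + (((δ/(j+1):ℝ)):ℂ) • lp.single 2 1 1 - x‖ = δ/(j+1) := by
            rw [add_sub_cancel_left, norm_smul, hsn, mul_one]
            simp only [Complex.norm_real, Real.norm_eq_abs]
            exact abs_of_nonneg (by positivity)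
          rw [h1]
          have hjN : (δ/ε) < (j:ℝ)+1 := by
            have : (N:ℝ) ≤ j := by exact_mod_cast hj
            linarith
          rw [div_lt_iff₀ (by positivity)]
          calc δ = (δ/ε) * ε := by field_simp
          _ < ((j:ℝ)+1) * ε := mul_lt_mul_of_pos_right hjN hε
          _ = ε * ((j:ℝ)+1) := mul_comm _ _
        have hc1 : ContinuousAt h₁ x :=
          (hh₁.1.1.differentiableAt (hoB.mem_nhds hx)).continuousAt
        have hc2 : ContinuousAt h₂ x :=
          (hh₂.1.1.differentiableAt (hoB.mem_nhds hx)).continuousAt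
        have t1 : Filter.Tendsto (fun j => h₁ (y j)) Filter.atTop (nhds (h₁ x)) :=
          hc1.tendsto.comp hytend
        have t2 : Filter.Tendsto (fun j => h₂ (y j)) Filter.atTop (nhds (h₂ x)) :=
          hc2.tendsto.comp hytend
        have hfun : (fun j => h₁ (y j)) = fun j => h₂ (y j) :=
          funext fun j => hkey (y j) (hyB j) (hy1 j)
        rw [hfun] at t1
        exact tendsto_nhds_unique t1 t2
    · -- fiber condition
      intro h hh x hx m
      rcases Nat.eq_zero_or_pos m with rfl | hm
      · rw [show (Psi h).toFun (coord 0) x = PsiFun h (coord 0) x from rfl, Psi_coord0]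
        rw [hgdef x, lp.single_apply_self]
      · rw [show (Psi h).toFun (coord m) x = PsiFun h (coord m) x from rfl,
          Psi_coordm h m hm x]
        rw [hgdef x, lp.single_apply_ne 2 0 _ (by omega : m ≠ 0)]
    · -- analyticity
      intro f hf x hx
      obtain ⟨M, hM0, hM⟩ := boundOfUC hf.2
      constructor
      · intro h _
        refine ⟨1, one_pos, M, fun k hk _ => ?_⟩
        exact le_of_tendsto (Psi_tendsto k hx hM).norm
          (Filter.Eventually.of_forall fun n => hM _ (Qmem hx (hgood_norm k hx) n))
      · intro h hh k hk
        have hSopen := Sopen h k hh hk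
        have hnice : DifferentiableOn ℂ
            (fun z => limUnder (UF : Filter ℕ) (fun n => f (Qpt x (h x + z • k x) n)))
            {z : ℂ | (h + z • k) ∈ ballHV} := by
          refine ulim_diffOn hSopen (fun n z => f (Qpt x (h x + z • k x) n)) (M := M) ?_ ?_
          · intro n
            refine DifferentiableOn.comp hf.1 ((QptDiffZ x (h x) (k x) n).differentiableOn) ?_
            intro z hz
            have hb1 : ‖h x + z • k x‖ ≤ 1 := by
              rw [← hplus_apply]
              exact norm_le_of_ballHV hz hx
            exact Qmem hx hb1 n
          · intro n z hz
            have hb1 : ‖h x + z • k x‖ ≤ 1 := by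
              rw [← hplus_apply]
              exact norm_le_of_ballHV hz hx
            exact hM _ (Qmem hx hb1 n)
        refine hnice.congr ?_
        intro z hz
        show PsiFun (h + z • k) f x = _
        unfold PsiFun
        rw [hgood_eq hz]
        rfl
end
end

section
/- Let g : B_{ℓ₂} → ℓ₂ be holomorphic with g(0) = 0 and ‖g(x)‖ ≤ 1 for all x ∈ B_{ℓ₂}. Let P : ℓ₂ → ℓ₂ be a continuous linear map with ‖P‖ ≤ 1 such that g(x) = g(P x) for all x ∈ B_{ℓ₂}, and let w ∈ ker P with ‖w‖ = 1. Then for every x ∈ B_{ℓ₂} one has ‖g(x)‖² + |⟨x,w⟩|² ≤ ‖x‖² < 1. -/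
open Metric Set Filter

set_option maxHeartbeats 1000000
noncomputable section

/-- if `g` is holomorphic on `B` with `g(0)=0`, `‖g‖ ≤ 1`, `g = g ∘ P` with
`‖P‖ ≤ 1`, and `w ∈ ker P` has norm one, then `‖g(x)‖² + |⟨x,w⟩|² ≤ ‖x‖² < 1` on `B`. -/
theorem stmt10 (g : ℓ2 → ℓ2) (hdiff : DifferentiableOn ℂ g oB) (hg0 : g 0 = 0)
    (hgb : ∀ x ∈ oB, ‖g x‖ ≤ 1)
    (P : ℓ2 →L[ℂ] ℓ2) (hP : ‖P‖ ≤ 1) (hgp : ∀ x ∈ oB, g x = g (P x))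
    (w : ℓ2) (hw : P w = 0) (hwn : ‖w‖ = 1) :
    ∀ x ∈ oB, ‖g x‖ ^ 2 + ‖(inner ℂ x w : ℂ)‖ ^ 2 ≤ ‖x‖ ^ 2 ∧ ‖x‖ ^ 2 < 1 := by
  have hoB : IsOpen oB := isOpen_ball
  -- Schwarz lemma
  have schwarz : ∀ y ∈ oB, ‖g y‖ ≤ ‖y‖ := by
    intro y hy
    rcases eq_or_ne y 0 with rfl | hy0
    · simp [hg0]
    have hyn : (0:ℝ) < ‖y‖ := norm_pos_iff.mpr hy0
    set u : ℓ2 := (‖y‖ : ℂ)⁻¹ • y with hu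
    have hun : ‖u‖ = 1 := by
      rw [hu, norm_smul]
      simp [abs_of_pos hyn, inv_mul_cancel₀ hyn.ne']
    have hmem : ∀ z : ℂ, z ∈ ball (0:ℂ) 1 → z • u ∈ oB := by
      intro z hz
      rw [mem_ball_zero_iff] at hz
      rw [oB, mem_ball_zero_iff, norm_smul, hun, mul_one]
      exact hz
    have key : ∀ ε > (0:ℝ), ‖g y‖ ≤ (1 + ε) * ‖y‖ := by
      intro ε hε
      have hd : DifferentiableOn ℂ (fun z : ℂ => g (z • u)) (ball 0 1) := by
        intro z hz
        exact ((hdiff.differentiableAt (hoB.mem_nhds (hmem z hz))).comp z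
          ((differentiable_id.smul_const u) z)).differentiableWithinAt
      have hmaps : MapsTo (fun z : ℂ => g (z • u)) (ball (0:ℂ) 1)
          (ball (g ((0:ℂ) • u)) (1 + ε)) := by
        intro z hz
        rw [zero_smul, hg0, mem_ball_zero_iff]
        exact lt_of_le_of_lt (hgb _ (hmem z hz)) (by linarith)
      have hzm : (‖y‖ : ℂ) ∈ ball (0:ℂ) 1 := by
        rw [mem_ball_zero_iff]
        simpa [abs_of_pos hyn] using (by simpa [oB, mem_ball_zero_iff] using hy : ‖y‖ < 1)
      have := Complex.dist_le_div_mul_dist_of_mapsTo_ball hd (hmaps.mono_right ball_subset_closedBall) hzm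
      have hfy : ((‖y‖ : ℂ)) • u = y := by
        rw [hu, smul_smul, mul_inv_cancel₀ (by exact_mod_cast hyn.ne'), one_smul]
      rw [zero_smul, hg0, hfy, dist_zero_right, dist_zero_right, div_one] at this
      rw [Complex.norm_real, Real.norm_eq_abs, abs_of_pos hyn] at this
      exact this
    refine le_of_forall_pos_le_add fun ε hε => ?_
    have := key (ε / ‖y‖) (div_pos hε hyn)
    calc ‖g y‖ ≤ (1 + ε / ‖y‖) * ‖y‖ := this
      _ = ‖y‖ + ε := by field_simp
  intro x hx
  have hx1 : ‖x‖ < 1 := by simpa [oB, mem_ball_zero_iff] using hx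
  refine ⟨?_, by nlinarith [norm_nonneg x]⟩
  set b : ℂ := inner ℂ w x with hb
  set y : ℓ2 := x - b • w with hy
  have horth : (inner ℂ y (b • w) : ℂ) = 0 := by
    have hww : (inner ℂ w w : ℂ) = 1 := by
      rw [inner_self_eq_norm_sq_to_K, hwn]; norm_num
    rw [inner_smul_right, hy, inner_sub_left, inner_smul_left, hww, mul_one, hb,
      inner_conj_symm]
    ring
  have hxyw : x = y + b • w := by rw [hy]; abel
  have hpyth : ‖x‖ ^ 2 = ‖y‖ ^ 2 + ‖b‖ ^ 2 := by
    have := norm_add_sq_eq_norm_sq_add_norm_sq_of_inner_eq_zero y (b • w) horth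
    rw [← hxyw, norm_smul, hwn, mul_one] at this
    rw [pow_two, pow_two, pow_two, this]
  have hbx : ‖(inner ℂ x w : ℂ)‖ = ‖b‖ := by
    rw [hb, ← norm_inner_symm]
  have hyo : y ∈ oB := by
    rw [oB, mem_ball_zero_iff]
    nlinarith [norm_nonneg y, norm_nonneg b, norm_nonneg x]
  have hgxy : g x = g y := by
    have hPx : P x = P y := by
      rw [hxyw, map_add, map_smul, hw, smul_zero, add_zero]
    rw [hgp x hx, hPx, ← hgp y hyo]
  have hs := schwarz y hyo
  rw [hgxy, hbx, hpyth]
  nlinarith [norm_nonneg (g y), norm_nonneg y]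
end
end
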